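/- arXiv:1603.02901 — 11 statements merged into one kernel-verified Lean document; each statement's English description precedes it below -/
import Mathlib

section
/- Let 0 < δ < 1 and let Q be a partially ordered set on n points with comp(Q) ≥ δ·n(n−1)/2. Then e(Q) ≤ n!·e^{2/(1−δ)}·(e(1−δ)/2)^n. -/
/-!
Classifying linear extensions by their top element gives `e(P) ≤ ∑ e(P - x)` over the maximal
elements `x` of `P`. If `P` has `m` maximal elements, they are pairwise incomparable, so deleting
one of them destroys at least `m - 1` incomparable pairs. Induction on `n` together with weighted
AM–GM then gives `e(P) ≤ (1 + I / n) ^ n`, where `I` is the number of incomparable pairs. Density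
means `I ≤ (1 - δ) n² / 2`, and `(1 + c n) ^ n ≤ (c n) ^ n e^{1/c}` and `(n / e) ^ n ≤ n!` turn
this into the stated bound.
-/

/-- The number of linear extensions of a partial order `P` on `n` points:
bijections to `{1, ..., n}` (modeled as `Fin n` with its usual order) that
are strictly monotone with respect to `P`. -/
noncomputable def linExtCount (n : ℕ) (P : PartialOrder (Fin n)) : ℕ :=
  Nat.card {f : Fin n ≃ Fin n // ∀ x y : Fin n, P.lt x y → f x < f y}

/-- The number of comparable pairs of `P`: each unordered comparable pair
`{x, y}` corresponds to exactly one ordered pair `(x, y)` with `x ≺ y`. -/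
noncomputable def compCount (n : ℕ) (P : PartialOrder (Fin n)) : ℕ :=
  Nat.card {p : Fin n × Fin n // P.lt p.1 p.2}

open Function

theorem Nat.card_subtype_eq_sum_ite {β : Type*} [Fintype β] (p : β → Prop) [DecidablePred p] :
    Nat.card {b // p b} = ∑ b, if p b then 1 else 0 := by
  rw [Nat.card_eq_fintype_card, Fintype.card_subtype, Finset.card_filter]

-- Weighted AM–GM for `a` and `n` copies of `T / n`.
theorem mul_pow_mul_succ_pow_le {a T : ℝ} (ha : 0 ≤ a) (hT : 0 ≤ T) (n : ℕ) :
    a * T ^ n * (n + 1) ^ (n + 1) ≤ n ^ n * (a + T) ^ (n + 1) := by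
  rcases n.eq_zero_or_pos with rfl | hn
  · simpa using hT
  rcases hT.eq_or_lt with rfl | hT
  · simp [zero_pow hn.ne']; positivity
  -- Bernoulli's inequality at the ratio of the mean `(a + T) / (n + 1)` to `T / n`
  have key := one_add_mul_le_pow (a := n * (a + T) / ((n + 1) * T) - 1) (by
    have : 0 ≤ n * (a + T) / ((n + 1) * T) := by positivity
    linarith) (n + 1)
  rw [add_sub_cancel, div_pow, le_div_iff₀ (by positivity)] at key
  push_cast at key
  field_simp at key
  rw [mul_pow, mul_pow] at key
  have : (n * T) * (a * T ^ n * (n + 1) ^ (n + 1)) ≤ (n * T) * (n ^ n * (a + T) ^ (n + 1)) := by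
    convert key using 1 <;> ring
  exact le_of_mul_le_mul_left this (by positivity)

theorem one_add_mul_pow_le_mul_pow_mul_exp {c : ℝ} (hc : 0 < c) (n : ℕ) :
    (1 + c * n) ^ n ≤ (c * n) ^ n * Real.exp c⁻¹ := by
  rcases n.eq_zero_or_pos with rfl | hn
  · simpa using Real.one_le_exp (inv_nonneg.2 hc.le)
  have hcn : 0 < c * n := by positivity
  have hbase : 1 + c * n ≤ c * n * Real.exp (c * n)⁻¹ := by
    have := mul_le_mul_of_nonneg_left (Real.add_one_le_exp (c * n)⁻¹) hcn.le
    rw [mul_add, mul_inv_cancel₀ hcn.ne', mul_one] at this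
    linarith
  calc (1 + c * n) ^ n ≤ (c * n * Real.exp (c * n)⁻¹) ^ n := by gcongr
    _ = (c * n) ^ n * Real.exp c⁻¹ := by
      rw [mul_pow, ← Real.exp_nat_mul]
      field_simp

theorem div_exp_one_pow_le_factorial (n : ℕ) : ((n : ℝ) / Real.exp 1) ^ n ≤ n.factorial := by
  have := Real.pow_div_factorial_le_exp (n : ℝ) n.cast_nonneg n
  rw [div_le_iff₀ (by positivity)] at this
  rw [div_pow, Real.exp_one_pow, div_le_iff₀ (by positivity)]
  linarith

namespace Equiv

variable {α : Type*} {n : ℕ} {x : α}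

def restrictOfEqLast (f : α ≃ Fin (n + 1)) (hx : f x = Fin.last n) : {y // y ≠ x} ≃ Fin n :=
  (f.subtypeEquiv fun y => by rw [← hx, f.injective.ne_iff]).trans
    (finSuccAboveOrderIso (Fin.last n)).symm.toEquiv

theorem restrictOfEqLast_lt_iff (f : α ≃ Fin (n + 1)) (hx : f x = Fin.last n)
    {a b : {y // y ≠ x}} : f.restrictOfEqLast hx a < f.restrictOfEqLast hx b ↔ f a < f b := by
  simp [restrictOfEqLast]

theorem restrictOfEqLast_injective {f g : α ≃ Fin (n + 1)} (hf : f x = Fin.last n)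
    (hg : g x = Fin.last n) (h : f.restrictOfEqLast hf = g.restrictOfEqLast hg) : f = g := by
  refine Equiv.ext fun y => ?_
  by_cases hy : y = x
  · rw [hy, hf, hg]
  · have := congrArg (fun e => (finSuccAboveOrderIso (Fin.last n) (e ⟨y, hy⟩) : Fin (n + 1))) h
    simpa [restrictOfEqLast] using this

end Equiv

section Relation

variable {α : Type*}

noncomputable def relLinExtCount (r : α → α → Prop) (n : ℕ) : ℕ :=
  Nat.card {f : α ≃ Fin n // ∀ x y, r x y → f x < f y}

noncomputable def incompCount (r : α → α → Prop) : ℕ :=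
  Nat.card {p : α × α // p.1 ≠ p.2 ∧ IncompRel r p.1 p.2}

theorem relLinExtCount_zero_le_one [Finite α] (r : α → α → Prop) : relLinExtCount r 0 ≤ 1 :=
  Finite.card_le_one_iff_subsingleton.2 inferInstance

theorem relLinExtCount_succ_le_sum [Fintype α] (r : α → α → Prop) (n : ℕ) (s : Finset α)
    (hs : ∀ x, (∀ y, ¬ r x y) → x ∈ s) :
    relLinExtCount r (n + 1) ≤ ∑ x ∈ s, relLinExtCount (r on ((↑) : {y // y ≠ x} → α)) n := by
  classical
  let E := {f : α ≃ Fin (n + 1) // ∀ x y, r x y → f x < f y}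
  have hmax (F : E) : ∀ y, ¬ r (F.1.symm (Fin.last n)) y := fun y hy => by
    have := F.2 _ y hy
    rw [F.1.apply_symm_apply] at this
    exact (Fin.le_last _).not_gt this
  let top : E → s := fun F => ⟨_, hs _ (hmax F)⟩
  have hfiber (x : s) :
      Nat.card {F // top F = x} ≤ relLinExtCount (r on ((↑) : {y // y ≠ x.1} → α)) n := by
    have hlast (F : {F // top F = x}) : F.1.1 x = Fin.last n :=
      (F.1.1.symm_apply_eq.1 (congrArg Subtype.val F.2)).symm
    refine Nat.card_le_card_of_injective (fun F => ⟨F.1.1.restrictOfEqLast (hlast F),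
      fun a b hab => (Equiv.restrictOfEqLast_lt_iff _ _).2 (F.1.2 a b hab)⟩) fun F G h => ?_
    exact Subtype.ext <| Subtype.ext <|
      Equiv.restrictOfEqLast_injective (hlast F) (hlast G) (congrArg Subtype.val h)
  calc relLinExtCount r (n + 1) = Nat.card (Σ x, {F // top F = x}) :=
        Nat.card_congr (Equiv.sigmaFiberEquiv top).symm
    _ = ∑ x : s, Nat.card {F // top F = x} := Nat.card_sigma
    _ ≤ ∑ x : s, relLinExtCount (r on ((↑) : {y // y ≠ x.1} → α)) n :=
        Finset.sum_le_sum fun x _ => hfiber x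
    _ = ∑ x ∈ s, relLinExtCount (r on ((↑) : {y // y ≠ x} → α)) n :=
        Finset.sum_coe_sort s fun x => relLinExtCount (r on ((↑) : {y // y ≠ x} → α)) n

theorem incompCount_eq_restrict_add [Fintype α] (r : α → α → Prop) (x : α) :
    incompCount r = incompCount (r on ((↑) : {y // y ≠ x} → α)) +
      2 * Nat.card {y // x ≠ y ∧ IncompRel r x y} := by
  classical
  let f : α → α → ℕ := fun a b => if a ≠ b ∧ IncompRel r a b then 1 else 0
  have hsymm (a b : α) : f a b = f b a := by
    simp only [f, ne_comm, IncompRel, and_comm (a := ¬ r a b)]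
  have hJ : incompCount r = ∑ a, ∑ b, f a b := by
    rw [incompCount, Nat.card_subtype_eq_sum_ite, Fintype.sum_prod_type]
  have hJx : incompCount (r on ((↑) : {y // y ≠ x} → α)) =
      ∑ a : {y // y ≠ x}, ∑ b : {y // y ≠ x}, f a b := by
    rw [incompCount, Nat.card_subtype_eq_sum_ite, Fintype.sum_prod_type]
    congr! 4 with a - b -
    simp [Subtype.ext_iff]
  have hdeg : Nat.card {y // x ≠ y ∧ IncompRel r x y} = ∑ b, f x b :=
    Nat.card_subtype_eq_sum_ite _
  have hrow (a : α) : ∑ b, f a b = f a x + ∑ b : {y // y ≠ x}, f a b :=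
    Fintype.sum_eq_add_sum_subtype_ne _ x
  have hcol : ∑ a : {y // y ≠ x}, f a x = ∑ b, f x b := by
    rw [Fintype.sum_eq_add_sum_subtype_ne (f x) x]
    simp [f, hsymm x]
  rw [hJ, hJx, hdeg, Fintype.sum_eq_add_sum_subtype_ne _ x,
    Finset.sum_congr rfl fun (a : {y // y ≠ x}) _ => hrow a, Finset.sum_add_distrib, hcol]
  ring

theorem card_erase_le_card_incompRel [Finite α] [DecidableEq α] {r : α → α → Prop}
    {s : Finset α} (hs : ∀ z ∈ s, ∀ y, ¬ r z y) {x : α} (hx : x ∈ s) :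
    (s.erase x).card ≤ Nat.card {y // x ≠ y ∧ IncompRel r x y} := by
  rw [← Nat.card_eq_finsetCard]
  refine Nat.card_mono (Set.toFinite _) fun z hz => ?_
  rw [Finset.coe_erase, Set.mem_sdiff, Finset.mem_coe, Set.mem_singleton_iff] at hz
  exact ⟨Ne.symm hz.2, hs x hx z, hs z hz.1 x⟩

theorem incompCount_restrict_add_two_mul_le [Fintype α] [DecidableEq α] {r : α → α → Prop}
    {s : Finset α} (hs : ∀ z ∈ s, ∀ y, ¬ r z y) {x : α} (hx : x ∈ s) :
    incompCount (r on ((↑) : {y // y ≠ x} → α)) + 2 * (s.erase x).card ≤ incompCount r := by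
  rw [incompCount_eq_restrict_add r x]
  gcongr
  exact card_erase_le_card_incompRel hs hx

theorem relLinExtCount_mul_pow_le [Fintype α] (r : α → α → Prop) :
    (relLinExtCount r (Fintype.card α) : ℝ) * Fintype.card α ^ Fintype.card α ≤
      (Fintype.card α + incompCount r / 2) ^ Fintype.card α := by
  induction h : Fintype.card α generalizing α with
  | zero => simpa using relLinExtCount_zero_le_one r
  | succ n ih =>
    classical
    let M : Finset α := {x | ∀ y, ¬ r x y}
    have hdrop (x : α) (hx : x ∈ M) :
        (incompCount (r on ((↑) : {y // y ≠ x} → α)) : ℝ) / 2 + (M.card - 1) ≤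
          incompCount r / 2 := by
      have hm : (M.card : ℝ) - 1 = (M.erase x).card := by
        rw [← Finset.card_erase_add_one hx]; push_cast; ring
      have : (incompCount (r on ((↑) : {y // y ≠ x} → α)) : ℝ) + 2 * (M.erase x).card ≤
          incompCount r := by
        exact_mod_cast incompCount_restrict_add_two_mul_le (s := M) (by simp [M]) hx
      linarith
    set T : ℝ := n + incompCount r / 2 - (M.card - 1) with hT_def
    have hT : 0 ≤ T := by
      have : (M.card : ℝ) ≤ n + 1 := by exact_mod_cast h ▸ M.card_le_univ
      linarith [(incompCount r).cast_nonneg (α := ℝ)]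
    have hE : (relLinExtCount r (n + 1) : ℝ) * n ^ n ≤ M.card * T ^ n := calc
      _ ≤ (∑ x ∈ M, (relLinExtCount (r on ((↑) : {y // y ≠ x} → α)) n : ℝ)) * n ^ n := by
        gcongr
        exact_mod_cast relLinExtCount_succ_le_sum r n M (by simp [M])
      _ = ∑ x ∈ M, (relLinExtCount (r on ((↑) : {y // y ≠ x} → α)) n : ℝ) * n ^ n :=
        Finset.sum_mul _ _ _
      _ ≤ ∑ x ∈ M, T ^ n := Finset.sum_le_sum fun x hx =>
        (ih _ (by simp [Fintype.card_subtype_compl, h])).trans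
          (pow_le_pow_left₀ (by positivity) (by linarith [hdrop x hx]) n)
      _ = M.card * T ^ n := by simp
    refine le_of_mul_le_mul_left ?_ (by exact_mod_cast Nat.pow_self_pos : (0 : ℝ) < n ^ n)
    push_cast
    calc (n : ℝ) ^ n * (relLinExtCount r (n + 1) * (n + 1) ^ (n + 1))
        = relLinExtCount r (n + 1) * n ^ n * (n + 1) ^ (n + 1) := by ring
      _ ≤ M.card * T ^ n * (n + 1) ^ (n + 1) := by gcongr
      _ ≤ n ^ n * (M.card + T) ^ (n + 1) := mul_pow_mul_succ_pow_le M.card.cast_nonneg hT n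
      _ = n ^ n * (n + 1 + incompCount r / 2) ^ (n + 1) := by ring

theorem incompCount_add_two_mul_card_rel [Fintype α] (r : α → α → Prop)
    (hr : ∀ a b, r a b → ¬ r b a) :
    incompCount r + 2 * Nat.card {p : α × α // r p.1 p.2} + Fintype.card α =
      Fintype.card α * Fintype.card α := by
  classical
  have hswap : Nat.card {p : α × α // r p.2 p.1} = Nat.card {p : α × α // r p.1 p.2} :=
    Nat.card_congr ((Equiv.prodComm α α).subtypeEquiv fun _ => Iff.rfl)
  have hdiag : Nat.card {p : α × α // p.1 = p.2} = Fintype.card α := by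
    rw [Nat.card_subtype_eq_sum_ite, Fintype.sum_prod_type]
    simp
  rw [← Fintype.card_prod, ← hdiag, Fintype.card_eq_sum_ones, two_mul]
  nth_rw 2 [← hswap]
  rw [incompCount]
  simp only [Nat.card_subtype_eq_sum_ite, ← Finset.sum_add_distrib]
  refine Finset.sum_congr rfl fun p _ => ?_
  have hab := hr p.1 p.2
  have hba := hr p.2 p.1
  split_ifs <;> simp_all [IncompRel]

end Relation

theorem linExtCount_le_of_dense_delta_near_one_general (n : ℕ) (δ : ℝ) (hδ1 : δ < 1)
    (P : PartialOrder (Fin n))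
    (hcomp : δ * ((n : ℝ) * ((n : ℝ) - 1) / 2) ≤ (compCount n P : ℝ)) :
    (linExtCount n P : ℝ) ≤
      (Nat.factorial n : ℝ) * Real.exp (2 / (1 - δ)) * (Real.exp 1 * (1 - δ) / 2) ^ n := by
  have hε : 0 < 1 - δ := by linarith
  have hpairs := incompCount_add_two_mul_card_rel P.lt fun a b => @lt_asymm _ P.toPreorder a b
  have hkey := relLinExtCount_mul_pow_le P.lt
  simp only [Fintype.card_fin] at hpairs hkey
  have hJ : (incompCount P.lt : ℝ) / 2 ≤ n * ((1 - δ) / 2 * n) := by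
    have : (incompCount P.lt : ℝ) + 2 * compCount n P + n = n * n := by exact_mod_cast hpairs
    nlinarith [mul_nonneg hε.le n.cast_nonneg]
  have hE : (linExtCount n P : ℝ) ≤ (1 + (1 - δ) / 2 * n) ^ n := by
    refine le_of_mul_le_mul_right ?_ (by exact_mod_cast Nat.pow_self_pos : (0 : ℝ) < n ^ n)
    calc (linExtCount n P : ℝ) * n ^ n ≤ (n + incompCount P.lt / 2) ^ n := hkey
      _ ≤ (n * 1 + n * ((1 - δ) / 2 * n)) ^ n := by gcongr; linarith
      _ = (1 + (1 - δ) / 2 * n) ^ n * n ^ n := by rw [← mul_add, mul_pow, mul_comm]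
  calc (linExtCount n P : ℝ) ≤ (1 + (1 - δ) / 2 * n) ^ n := hE
    _ ≤ ((1 - δ) / 2 * n) ^ n * Real.exp ((1 - δ) / 2)⁻¹ :=
      one_add_mul_pow_le_mul_pow_mul_exp (by positivity) n
    _ = (n / Real.exp 1) ^ n * Real.exp (2 / (1 - δ)) * (Real.exp 1 * (1 - δ) / 2) ^ n := by
      rw [inv_div, mul_right_comm, ← mul_pow]
      congr 2
      field_simp
    _ ≤ (Nat.factorial n : ℝ) * Real.exp (2 / (1 - δ)) * (Real.exp 1 * (1 - δ) / 2) ^ n := by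
      gcongr
      exact div_exp_one_pow_le_factorial n

theorem linExtCount_le_of_dense_delta_near_one (n : ℕ) (δ : ℝ) (hδ0 : 0 < δ) (hδ1 : δ < 1)
    (P : PartialOrder (Fin n))
    (hcomp : δ * ((n : ℝ) * ((n : ℝ) - 1) / 2) ≤ (compCount n P : ℝ)) :
    (linExtCount n P : ℝ) ≤
      (Nat.factorial n : ℝ) * Real.exp (2 / (1 - δ)) * (Real.exp 1 * (1 - δ) / 2) ^ n :=
  linExtCount_le_of_dense_delta_near_one_general n δ hδ1 P hcomp
end

section
/- Let Q be a partially ordered set on n points, and for each point t let λ_t be the number of points s with s ⪯ t (the size of the principal downset of t). Then e(Q) ≥ n! / ∏_t λ_t, where the product is over all points t of Q. -/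
section Step2
variable {α : Type} [PartialOrder α] {n : ℕ}

/-- Removing the top element of a linear extension. -/
def dropTop (f : α ≃ Fin (n + 1)) (m : α) (hfm : f m = Fin.last n) :
    {x : α // x ≠ m} ≃ Fin n where
  toFun x := (f x.1).castPred (fun h => x.2 (f.injective (h.trans hfm.symm)))
  invFun j := ⟨f.symm j.castSucc, fun h => by
    have : j.castSucc = Fin.last n := by
      have := congrArg f (h : f.symm j.castSucc = m)
      rwa [Equiv.apply_symm_apply, hfm] at this
    exact (Fin.castSucc_lt_last j).ne this⟩
  left_inv x := by
    apply Subtype.ext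
    simp [Fin.castSucc_castPred]
  right_inv j := by simp [Fin.castPred_castSucc]

open Classical in
/-- Adding a top element to a linear extension. -/
noncomputable def addTop (m : α) (g : {x : α // x ≠ m} ≃ Fin n) : α ≃ Fin (n + 1) where
  toFun x := if h : x = m then Fin.last n else (g ⟨x, h⟩).castSucc
  invFun j := if h : j = Fin.last n then m else (g.symm (j.castPred h)).1
  left_inv x := by
    by_cases h : x = m
    · simp [h]
    · simp only [dif_neg h]
      rw [dif_neg (Fin.castSucc_lt_last _).ne]
      simp [Fin.castPred_castSucc]
  right_inv j := by
    by_cases h : j = Fin.last n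
    · simp [h]
    · simp only [dif_neg h, dif_neg (g.symm (j.castPred h)).2]
      rw [Subtype.coe_eta, Equiv.apply_symm_apply, Fin.castSucc_castPred]
end Step2

section Step2b
variable {α : Type} [PartialOrder α] {n : ℕ}

theorem card_extEq (m : α) (hm : IsMax m) :
    Nat.card {f : α ≃ Fin (n + 1) //
        (∀ x y : α, x < y → f x < f y) ∧ f m = Fin.last n} =
      Nat.card {g : {x : α // x ≠ m} ≃ Fin n //
        ∀ x y : {x : α // x ≠ m}, x < y → g x < g y} := by
  refine Nat.card_congr ⟨fun f => ⟨dropTop f.1 m f.2.2, ?_⟩, fun g => ⟨addTop m g.1, ?_, ?_⟩, ?_, ?_⟩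
  · intro x y hxy
    have h1 : f.1 x.1 < f.1 y.1 := f.2.1 _ _ (Subtype.coe_lt_coe.mpr hxy)
    simp only [dropTop, Equiv.coe_fn_mk]
    exact Fin.castPred_lt_castPred_iff.mpr h1
  · -- mono of addTop
    intro x y hxy
    simp only [addTop, Equiv.coe_fn_mk]
    by_cases hx : x = m
    · exact absurd hxy (by rw [hx]; exact hm.not_lt)
    · by_cases hy : y = m
      · simp only [dif_neg hx, dif_pos hy]
        exact Fin.castSucc_lt_last _
      · simp only [dif_neg hx, dif_neg hy]
        have : (⟨x, hx⟩ : {x : α // x ≠ m}) < ⟨y, hy⟩ := Subtype.mk_lt_mk.mpr hxy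
        exact Fin.castSucc_lt_castSucc_iff.mpr (g.2 _ _ this)
  · simp [addTop]
  · -- left inverse
    rintro ⟨f, hf, hfm⟩
    apply Subtype.ext
    apply Equiv.ext
    intro x
    simp only [addTop, dropTop, Equiv.coe_fn_mk]
    by_cases hx : x = m
    · rw [dif_pos hx, hx, hfm]
    · rw [dif_neg hx, Fin.castSucc_castPred]
  · -- right inverse
    rintro ⟨g, hg⟩
    apply Subtype.ext
    apply Equiv.ext
    intro x
    simp only [addTop, dropTop, Equiv.coe_fn_mk]
    apply Fin.ext
    rw [Fin.coe_castPred]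
    rw [dif_neg x.2]
    simp [Subtype.coe_eta]
end Step2b

section Step1
variable {α : Type} [PartialOrder α] {n : ℕ}

theorem natCard_sigma {ι : Type} [Fintype ι] (f : ι → Type) [∀ i, Finite (f i)] :
    Nat.card (Σ i, f i) = ∑ i, Nat.card (f i) := by
  letI := fun i => Fintype.ofFinite (f i)
  simp [Nat.card_eq_fintype_card, Fintype.card_sigma]

theorem card_ext_split [Fintype α] :
    Nat.card {f : α ≃ Fin (n + 1) // ∀ x y : α, x < y → f x < f y} =
      ∑ m : α, Nat.card {f : α ≃ Fin (n + 1) //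
        (∀ x y : α, x < y → f x < f y) ∧ f m = Fin.last n} := by
  rw [← natCard_sigma]
  refine Nat.card_congr ⟨fun f => ⟨f.1.symm (Fin.last n), f.1, f.2, by simp⟩,
    fun p => ⟨p.2.1, p.2.2.1⟩, fun f => rfl, ?_⟩
  rintro ⟨m, f, hf, hfm⟩
  have h : f.symm (Fin.last n) = m := by rw [← hfm, Equiv.symm_apply_apply]
  subst h
  rfl

theorem card_ext_eq_zero (m : α) (hm : ¬ IsMax m) :
    Nat.card {f : α ≃ Fin (n + 1) //
        (∀ x y : α, x < y → f x < f y) ∧ f m = Fin.last n} = 0 := by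
  obtain ⟨b, hb⟩ := not_isMax_iff.mp hm
  have : IsEmpty {f : α ≃ Fin (n + 1) //
      (∀ x y : α, x < y → f x < f y) ∧ f m = Fin.last n} := by
    constructor
    rintro ⟨f, hf, hfm⟩
    have := hf m b hb
    rw [hfm] at this
    exact absurd (Fin.le_last (f b)) this.not_ge
  exact Nat.card_of_isEmpty

end Step1

section Step3
variable {α : Type} [Fintype α] [PartialOrder α]

theorem card_downset_erase (m : α) (hm : IsMax m) (t : {x : α // x ≠ m}) :
    Nat.card {s : {x : α // x ≠ m} // s ≤ t} = Nat.card {s : α // s ≤ t.1} := by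
  have key : ∀ sv : α, sv ≤ t.1 → sv ≠ m := by
    rintro sv hs rfl
    exact t.2 (le_antisymm (hm hs) hs)
  exact Nat.card_congr ⟨fun s => ⟨s.1.1, Subtype.coe_le_coe.mpr s.2⟩,
    fun s => ⟨⟨s.1, key s.1 s.2⟩, Subtype.mk_le_mk.mpr s.2⟩, fun s => rfl, fun s => rfl⟩

theorem sum_downset_max [DecidableEq α] [DecidablePred (IsMax (α := α))] [DecidableRel ((· ≤ ·) : α → α → Prop)] :
    (Fintype.card α : ℕ) ≤
      ∑ m ∈ Finset.univ.filter (fun m : α => IsMax m),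
        Nat.card {s : α // s ≤ m} := by
  have hcov : (Finset.univ : Finset α) ⊆
      (Finset.univ.filter (fun m : α => IsMax m)).biUnion
        (fun m => Finset.univ.filter (fun s => s ≤ m)) := by
    intro s _
    obtain ⟨b, hsb, hb⟩ := Finite.exists_le_maximal (p := fun _ : α => True) trivial (a := s)
    refine Finset.mem_biUnion.mpr ⟨b, ?_, ?_⟩
    · simp only [Finset.mem_filter, Finset.mem_univ, true_and]
      intro c hc
      exact hb.2 trivial hc
    · simp [hsb]
  calc (Fintype.card α : ℕ) = (Finset.univ : Finset α).card := Finset.card_univ.symm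
    _ ≤ _ := Finset.card_le_card hcov
    _ ≤ ∑ m ∈ Finset.univ.filter (fun m : α => IsMax m),
        (Finset.univ.filter (fun s => s ≤ m)).card := Finset.card_biUnion_le
    _ = _ := by
      refine Finset.sum_congr rfl fun m _ => ?_
      rw [Nat.card_eq_fintype_card, Fintype.card_subtype]

end Step3

theorem aux_main : ∀ (n : ℕ) (α : Type) [Fintype α] [PartialOrder α],
    Fintype.card α = n →
    (Nat.factorial n : ℝ) / ∏ t : α, (Nat.card {s : α // s ≤ t} : ℝ) ≤
      (Nat.card {f : α ≃ Fin n // ∀ x y : α, x < y → f x < f y} : ℝ) := by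
  intro n
  induction n with
  | zero =>
    intro α _ _ hcard
    haveI : IsEmpty α := Fintype.card_eq_zero_iff.mp hcard
    have h1 : (∏ t : α, (Nat.card {s : α // s ≤ t} : ℝ)) = 1 := by simp
    rw [h1, Nat.factorial_zero]
    haveI : Nonempty {f : α ≃ Fin 0 // ∀ x y : α, x < y → f x < f y} :=
      ⟨⟨Equiv.equivOfIsEmpty α (Fin 0), fun x _ _ => isEmptyElim x⟩⟩
    have := Nat.card_pos (α := {f : α ≃ Fin 0 // ∀ x y : α, x < y → f x < f y})
    push_cast
    rw [div_one]
    exact_mod_cast this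
  | succ n ih =>
    intro α _ _ hcard
    classical
    set lam : α → ℝ := fun t => (Nat.card {s : α // s ≤ t} : ℝ) with hlam
    have hlampos : ∀ t : α, 0 < lam t := by
      intro t
      have h0 : Nonempty {s : α // s ≤ t} := ⟨⟨t, le_refl t⟩⟩
      have h1 : 0 < Nat.card {s : α // s ≤ t} := Nat.card_pos
      simp only [hlam]
      exact_mod_cast h1
    have hLpos : 0 < ∏ t : α, lam t := Finset.prod_pos fun t _ => hlampos t
    set M : Finset α := Finset.univ.filter (fun m : α => IsMax m) with hM
    -- Step A: split
    have hsplit : Nat.card {f : α ≃ Fin (n + 1) // ∀ x y : α, x < y → f x < f y} =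
        ∑ m ∈ M, Nat.card {f : α ≃ Fin (n + 1) //
          (∀ x y : α, x < y → f x < f y) ∧ f m = Fin.last n} := by
      rw [card_ext_split]
      refine (Finset.sum_filter_of_ne ?_).symm
      intro x _ hx
      by_contra h
      exact hx (card_ext_eq_zero x h)
    -- Step B: each maximal term
    have hterm : ∀ m ∈ M,
        (Nat.factorial n : ℝ) * lam m / ∏ t : α, lam t ≤
          (Nat.card {f : α ≃ Fin (n + 1) //
            (∀ x y : α, x < y → f x < f y) ∧ f m = Fin.last n} : ℝ) := by
      intro m hmM
      have hm : IsMax m := by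
        simpa [hM] using hmM
      have hcard' : Fintype.card {x : α // x ≠ m} = n := by
        rw [Fintype.card_subtype_compl, Fintype.card_subtype_eq, hcard]
        omega
      have hIH := ih {x : α // x ≠ m} hcard'
      rw [card_extEq m hm]
      refine le_trans ?_ hIH
      -- compare the products
      have hprod : (∏ t : {x : α // x ≠ m}, (Nat.card {s : {x : α // x ≠ m} // s ≤ t} : ℝ)) =
          ∏ t ∈ Finset.univ.erase m, lam t := by
        calc (∏ t : {x : α // x ≠ m}, (Nat.card {s : {x : α // x ≠ m} // s ≤ t} : ℝ))
            = ∏ t : {x : α // x ≠ m}, lam t.1 := by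
              refine Finset.prod_congr rfl fun t _ => ?_
              simp only [hlam]
              exact_mod_cast congrArg Nat.cast (card_downset_erase m hm t)
          _ = ∏ t ∈ Finset.univ.erase m, lam t :=
              (Finset.prod_subtype (Finset.univ.erase m) (by simp) lam).symm
      rw [hprod]
      have herase : lam m * ∏ t ∈ Finset.univ.erase m, lam t = ∏ t : α, lam t :=
        Finset.mul_prod_erase Finset.univ lam (Finset.mem_univ m)
      have herasepos : 0 < ∏ t ∈ Finset.univ.erase m, lam t := by
        refine Finset.prod_pos fun t _ => hlampos t
      rw [div_le_div_iff₀ hLpos herasepos]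
      refine le_of_eq ?_
      calc (Nat.factorial n : ℝ) * lam m * ∏ t ∈ Finset.univ.erase m, lam t
          = (Nat.factorial n : ℝ) * (lam m * ∏ t ∈ Finset.univ.erase m, lam t) := by ring
        _ = (Nat.factorial n : ℝ) * ∏ t : α, lam t := by rw [herase]
    -- Step C: summing
    have hsum : ((n + 1 : ℕ) : ℝ) ≤ ∑ m ∈ M, lam m := by
      have h0 := sum_downset_max (α := α)
      rw [hcard] at h0
      calc ((n + 1 : ℕ) : ℝ) ≤ ((∑ m ∈ M, Nat.card {s : α // s ≤ m} : ℕ) : ℝ) := by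
            exact_mod_cast h0
        _ = ∑ m ∈ M, lam m := by rw [Nat.cast_sum]
    calc ((n+1).factorial : ℝ) / ∏ t : α, lam t
        = (Nat.factorial n : ℝ) * ((n : ℝ) + 1) / ∏ t : α, lam t := by
          rw [Nat.factorial_succ]; push_cast; ring
      _ ≤ (Nat.factorial n : ℝ) * (∑ m ∈ M, lam m) / ∏ t : α, lam t := by
          gcongr
          exact_mod_cast hsum
      _ = ∑ m ∈ M, (Nat.factorial n : ℝ) * lam m / ∏ t : α, lam t := by
          rw [Finset.mul_sum, Finset.sum_div]
      _ ≤ ∑ m ∈ M, (Nat.card {f : α ≃ Fin (n + 1) //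
            (∀ x y : α, x < y → f x < f y) ∧ f m = Fin.last n} : ℝ) :=
          Finset.sum_le_sum hterm
      _ = _ := by rw [hsplit, Nat.cast_sum]


def PosetOf {n : ℕ} (P : PartialOrder (Fin n)) : Type := Fin n

instance {n : ℕ} {P : PartialOrder (Fin n)} : Fintype (PosetOf P) :=
  inferInstanceAs (Fintype (Fin n))

instance {n : ℕ} {P : PartialOrder (Fin n)} : PartialOrder (PosetOf P) := P

theorem linExtCount_ge_hook_length (n : ℕ) (P : PartialOrder (Fin n)) :
    (Nat.factorial n : ℝ) /
        ∏ t : Fin n, (Nat.card {s : Fin n // P.le s t} : ℝ) ≤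
      (linExtCount n P : ℝ) := by
  have h := aux_main n (PosetOf P) (by exact Fintype.card_fin n)
  exact h
end

section
/- Let 0 < δ ≤ 1 and let Q be a partially ordered set on n points (n ≥ 1) with comp(Q) ≤ δ·n(n−1)/2. Then e(Q) ≥ n!·(2/(δ(n−1)+2))^n, and consequently e(Q) ≥ e^{1−2/δ}·(2/(eδ))^n. -/
/-!
Removing a minimal element `x` from a finite poset `S` and prepending it to a linear extension
of `S ∖ {x}` gives `e(S) ≥ ∑_{x minimal} e(S ∖ {x})`; since every element lies above a minimal one,
`|S| ≤ ∑_{x minimal} |↑x|` with `↑x = {z ∈ S | x ≤ z}`. Induction then yields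
`|S|! ≤ e(S) · ∏_{y ∈ S} |↑y|`, and AM-GM bounds the product by `(1 + comp/n)^n`, which the
sparsity hypothesis turns into `((δ(n-1)+2)/2)^n`. The second bound follows from `n! ≥ (n/e)^n`
and `(1 - t/n)^n ≤ e^{-t}` with `t = 1 - 2/δ`.
-/

open Finset
open scoped Nat

section LinearListings

variable {α : Type*} [PartialOrder α] [DecidableEq α] [DecidableLT α]

/-- Linear extensions of `S`, listed from bottom to top. -/
noncomputable def linearListings (S : Finset α) : Finset (List α) :=
  S.toList.permutations.toFinset.filter (List.Pairwise fun a b => ¬ b < a)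

theorem mem_linearListings {S : Finset α} {l : List α} :
    l ∈ linearListings S ↔ l.Nodup ∧ l.toFinset = S ∧ l.Pairwise (fun a b => ¬ b < a) := by
  have hperm : l.Perm S.toList ↔ l.Nodup ∧ l.toFinset = S :=
    ⟨fun h => ⟨h.nodup_iff.2 S.nodup_toList, by rw [List.toFinset_eq_of_perm _ _ h, S.toList_toFinset]⟩,
      fun ⟨hl, hS⟩ => List.perm_of_nodup_nodup_toFinset_eq hl S.nodup_toList (by simp [hS])⟩
  simp only [linearListings, mem_filter, List.mem_toFinset, List.mem_permutations, hperm, and_assoc]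

theorem cons_mem_linearListings {S : Finset α} {x : α} {l : List α} (hx : x ∈ S)
    (hmin : ∀ y ∈ S, ¬ y < x) (hl : l ∈ linearListings (S.erase x)) :
    x :: l ∈ linearListings S := by
  obtain ⟨hnd, hS, hpw⟩ := mem_linearListings.1 hl
  have hmem : ∀ y ∈ l, y ∈ S.erase x := fun y hy => hS ▸ List.mem_toFinset.2 hy
  refine mem_linearListings.2 ⟨List.nodup_cons.2 ⟨fun h => by simpa using hmem x h, hnd⟩, ?_,
    List.pairwise_cons.2 ⟨fun y hy => hmin y (mem_of_mem_erase (hmem y hy)), hpw⟩⟩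
  rw [List.toFinset_cons, hS, insert_erase hx]

theorem sum_card_linearListings_erase_le (S : Finset α) :
    ∑ x ∈ S with ∀ y ∈ S, ¬ y < x, #(linearListings (S.erase x)) ≤ #(linearListings S) := by
  rw [← card_sigma]
  refine card_le_card_of_injOn (fun p => p.1 :: p.2) (fun p hp => ?_) ?_
  · simp only [mem_coe, mem_sigma, mem_filter] at hp
    exact cons_mem_linearListings hp.1.1 hp.1.2 hp.2
  · rintro ⟨x, l⟩ - ⟨x', l'⟩ - h
    simp only [List.cons.injEq] at h
    obtain ⟨rfl, rfl⟩ := h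
    rfl

theorem natCard_strictMono_equiv_eq_card_linearListings [Fintype α] {m : ℕ}
    (hm : Fintype.card α = m) :
    Nat.card {f : α ≃ Fin m // ∀ x y, x < y → f x < f y} = #(linearListings (univ : Finset α)) := by
  rw [← Nat.card_eq_finsetCard]
  refine Nat.card_eq_of_bijective (fun f => ⟨List.ofFn f.1.symm, ?_⟩) ⟨fun f g h => ?_, ?_⟩
  · refine mem_linearListings.2 ⟨List.nodup_ofFn.2 f.1.symm.injective, ?_, List.pairwise_ofFn.2 ?_⟩
    · ext x; simpa using ⟨f.1 x, by simp⟩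
    · intro i j hij hji
      have := f.2 _ _ hji
      rw [Equiv.apply_symm_apply, Equiv.apply_symm_apply] at this
      exact lt_asymm this hij
  · have := List.ofFn_injective (congrArg Subtype.val h)
    exact Subtype.ext (Equiv.symm_bijective.injective (Equiv.coe_fn_injective this))
  · rintro ⟨l, hl⟩
    obtain ⟨hnd, huniv, hpw⟩ := mem_linearListings.1 hl
    have hlen : l.length = m := by
      rw [← hm, ← card_univ, ← huniv, List.toFinset_card_of_nodup hnd]
    subst hlen
    have hbij : Function.Bijective l.get :=
      (Fintype.bijective_iff_injective_and_card _).2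
        ⟨List.nodup_iff_injective_get.1 hnd, by simp [← hm]⟩
    set e := Equiv.ofBijective _ hbij
    have hofFn : List.ofFn e = l := List.ofFn_get l
    rw [← hofFn, List.pairwise_ofFn] at hpw
    refine ⟨⟨e.symm, fun x y hxy => ?_⟩, Subtype.ext hofFn⟩
    by_contra! h
    rcases h.lt_or_eq with h | h
    · exact hpw h (by simpa using hxy)
    · exact hxy.ne (e.symm.injective h).symm

variable [DecidableLE α]

theorem card_le_sum_card_le_of_minimal (S : Finset α) :
    #S ≤ ∑ x ∈ S with ∀ y ∈ S, ¬ y < x, #{y ∈ S | x ≤ y} := by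
  refine (card_le_card fun y hy => ?_).trans card_biUnion_le
  obtain ⟨x, hxy, hx⟩ := S.exists_le_minimal hy
  simp only [mem_biUnion, mem_filter]
  exact ⟨x, ⟨hx.prop, fun z hz hzx => hx.not_prop_of_lt hzx hz⟩, hy, hxy⟩

theorem factorial_card_le_card_linearListings_mul_prod (S : Finset α) :
    (#S)! ≤ #(linearListings S) * ∏ y ∈ S, #{z ∈ S | y ≤ z} := by
  induction S using Finset.strongInduction with
  | H S ih =>
  rcases S.eq_empty_or_nonempty with rfl | hS
  · have : [] ∈ linearListings (∅ : Finset α) := mem_linearListings.2 (by simp)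
    simpa using card_pos.2 ⟨_, this⟩
  set M := {x ∈ S | ∀ y ∈ S, ¬ y < x}
  set w : Finset α → α → ℕ := fun T y => #{z ∈ T | y ≤ z}
  have hstep : ∀ x ∈ M, (#S - 1)! * w S x ≤ #(linearListings (S.erase x)) * ∏ y ∈ S, w S y := by
    intro x hx
    have hxS : x ∈ S := (mem_filter.1 hx).1
    calc (#S - 1)! * w S x
        ≤ #(linearListings (S.erase x)) * (∏ y ∈ S.erase x, w (S.erase x) y) * w S x := by
          gcongr
          simpa [card_erase_of_mem hxS] using ih _ (erase_ssubset hxS)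
      _ ≤ #(linearListings (S.erase x)) * (∏ y ∈ S.erase x, w S y) * w S x := by
          gcongr with y
          exact card_le_card (filter_subset_filter _ (erase_subset x S))
      _ = #(linearListings (S.erase x)) * ∏ y ∈ S, w S y := by
          rw [mul_assoc, ← mul_prod_erase S (w S) hxS, mul_comm (w S x)]
  calc (#S)! = (#S - 1)! * #S := by rw [mul_comm, Nat.mul_factorial_pred hS.card_ne_zero]
    _ ≤ (#S - 1)! * ∑ x ∈ M, w S x := by gcongr; exact card_le_sum_card_le_of_minimal S
    _ ≤ ∑ x ∈ M, #(linearListings (S.erase x)) * ∏ y ∈ S, w S y := by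
        rw [mul_sum]; exact sum_le_sum hstep
    _ ≤ #(linearListings S) * ∏ y ∈ S, w S y := by
        rw [← sum_mul]; gcongr; exact sum_card_linearListings_erase_le S

theorem sum_card_le_eq_card_add_natCard_lt [Fintype α] :
    ∑ x : α, #{y | x ≤ y} = Fintype.card α + Nat.card {p : α × α // p.1 < p.2} := by
  have hsplit : ∀ x : α, #{y | x ≤ y} = 1 + #{y | x < y} := fun x => by
    rw [add_comm, ← card_insert_of_notMem (a := x) (s := {y | x < y}) (by simp)]
    congr 1; ext y; simp [le_iff_eq_or_lt, eq_comm]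
  rw [Nat.card_eq_fintype_card, Fintype.card_subtype, card_filter, Fintype.sum_prod_type]
  simp only [hsplit, sum_add_distrib, card_filter, sum_const, card_univ, smul_eq_mul, mul_one]

end LinearListings

theorem Real.prod_le_arith_mean_pow {ι : Type*} (s : Finset ι) (f : ι → ℝ)
    (hf : ∀ i ∈ s, 0 ≤ f i) : ∏ i ∈ s, f i ≤ ((∑ i ∈ s, f i) / #s) ^ #s := by
  rcases s.eq_empty_or_nonempty with rfl | hs
  · simp
  have h := Real.geom_mean_le_arith_mean s (fun _ => 1) f (fun _ _ => zero_le_one)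
    (by simpa using hs.card_pos) hf
  simp only [Real.rpow_one, sum_const, nsmul_eq_mul, mul_one, one_mul] at h
  calc ∏ i ∈ s, f i = ((∏ i ∈ s, f i) ^ ((#s : ℝ)⁻¹)) ^ #s :=
        (Real.rpow_inv_natCast_pow (prod_nonneg hf) hs.card_pos.ne').symm
    _ ≤ ((∑ i ∈ s, f i) / #s) ^ #s := by
        gcongr
        exact Real.rpow_nonneg (prod_nonneg hf) _

theorem factorial_le_natCard_strictMono_equiv_mul_pow {α : Type*} [PartialOrder α] [Fintype α]
    {m : ℕ} (hm : Fintype.card α = m) :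
    (m ! : ℝ) ≤ Nat.card {f : α ≃ Fin m // ∀ x y, x < y → f x < f y} *
      (1 + Nat.card {p : α × α // p.1 < p.2} / m) ^ m := by
  classical
  have h := factorial_card_le_card_linearListings_mul_prod (univ : Finset α)
  rw [card_univ, hm, ← natCard_strictMono_equiv_eq_card_linearListings hm] at h
  have hmean : (∑ x : α, (#{y | x ≤ y} : ℝ)) / m ≤ 1 + Nat.card {p : α × α // p.1 < p.2} / m := by
    rw [← Nat.cast_sum, sum_card_le_eq_card_add_natCard_lt, hm, Nat.cast_add, add_div]
    gcongr
    exact div_self_le_one _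
  calc (m ! : ℝ) ≤ Nat.card {f : α ≃ Fin m // ∀ x y, x < y → f x < f y} *
        ∏ x : α, (#{y | x ≤ y} : ℝ) := by exact_mod_cast h
    _ ≤ Nat.card {f : α ≃ Fin m // ∀ x y, x < y → f x < f y} *
        ((∑ x : α, (#{y | x ≤ y} : ℝ)) / m) ^ m := by
      gcongr
      simpa [hm] using Real.prod_le_arith_mean_pow (univ : Finset α) _ (fun _ _ => Nat.cast_nonneg _)
    _ ≤ _ := by gcongr

theorem Real.exp_mul_pow_le_factorial_mul_pow {n : ℕ} (hn : 1 ≤ n) {δ : ℝ} (hδ : 0 < δ) :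
    Real.exp (1 - 2 / δ) * (2 / (Real.exp 1 * δ)) ^ n ≤
      (n ! : ℝ) * (2 / (δ * ((n : ℝ) - 1) + 2)) ^ n := by
  have hn' : (1 : ℝ) ≤ n := by exact_mod_cast hn
  set D := δ * ((n : ℝ) - 1) + 2
  have hD : 0 < D := by nlinarith
  have hexp : Real.exp (1 - 2 / δ) * (D / (n * δ)) ^ n ≤ 1 :=
    calc Real.exp (1 - 2 / δ) * (D / (n * δ)) ^ n
        = Real.exp (1 - 2 / δ) * (1 - (1 - 2 / δ) / n) ^ n := by
          congr 2; field_simp; simp only [D]; linarith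
      _ ≤ Real.exp (1 - 2 / δ) * Real.exp (-(1 - 2 / δ)) := by
          gcongr
          exact Real.one_sub_div_pow_le_exp_neg (by linarith [div_pos two_pos hδ])
      _ = 1 := by rw [← Real.exp_add, add_neg_cancel, Real.exp_zero]
  have hfac : ((n : ℝ) / Real.exp 1) ^ n ≤ n ! := by
    have := Real.pow_div_factorial_le_exp (x := (n : ℝ)) n.cast_nonneg n
    rw [div_le_iff₀ (by positivity), mul_comm, ← div_le_iff₀ (Real.exp_pos _)] at this
    rwa [div_pow, ← Real.exp_nat_mul, mul_one]
  calc Real.exp (1 - 2 / δ) * (2 / (Real.exp 1 * δ)) ^ n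
      = (2 / D) ^ n * (((n : ℝ) / Real.exp 1) ^ n *
          (Real.exp (1 - 2 / δ) * (D / (n * δ)) ^ n)) := by
        rw [show 2 / (Real.exp 1 * δ) = 2 / D * (n / Real.exp 1) * (D / (n * δ)) by field_simp,
          mul_pow, mul_pow]
        ring
    _ ≤ (2 / D) ^ n * (n ! * 1) := by gcongr
    _ = (n ! : ℝ) * (2 / D) ^ n := by rw [mul_one, mul_comm]

theorem linExtCount_ge_of_sparse_strong_general (n : ℕ) (hn : 1 ≤ n) (δ : ℝ)
    (hδ0 : 0 < δ) (P : PartialOrder (Fin n))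
    (hcomp : (compCount n P : ℝ) ≤ δ * ((n : ℝ) * ((n : ℝ) - 1) / 2)) :
    (Nat.factorial n : ℝ) * (2 / (δ * ((n : ℝ) - 1) + 2)) ^ n ≤ (linExtCount n P : ℝ) ∧
    Real.exp (1 - 2 / δ) * (2 / (Real.exp 1 * δ)) ^ n ≤ (linExtCount n P : ℝ) := by
  -- `P` becomes the order on the points; the target `Fin n` of `linExtCount` keeps its own order.
  let _ : PartialOrder (Fin n) := P
  have hn' : (1 : ℝ) ≤ n := by exact_mod_cast hn
  set D := δ * ((n : ℝ) - 1) + 2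
  have hD : 0 < D := by nlinarith
  have hfac : (n ! : ℝ) ≤ linExtCount n P * (1 + compCount n P / n) ^ n :=
    factorial_le_natCard_strictMono_equiv_mul_pow (Fintype.card_fin n)
  have hbase : 1 + (compCount n P : ℝ) / n ≤ D / 2 := by
    have : (compCount n P : ℝ) / n ≤ δ * ((n : ℝ) - 1) / 2 := by
      rw [div_le_iff₀ (by positivity)]; linarith
    linarith
  have hfirst : (n ! : ℝ) * (2 / D) ^ n ≤ linExtCount n P :=
    calc (n ! : ℝ) * (2 / D) ^ n ≤ linExtCount n P * (D / 2) ^ n * (2 / D) ^ n := by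
          gcongr
          exact hfac.trans (by gcongr)
      _ = linExtCount n P := by
          rw [mul_assoc, ← mul_pow, show D / 2 * (2 / D) = 1 by field_simp, one_pow, mul_one]
  exact ⟨hfirst, (Real.exp_mul_pow_le_factorial_mul_pow hn hδ0).trans hfirst⟩

theorem linExtCount_ge_of_sparse_strong (n : ℕ) (hn : 1 ≤ n) (δ : ℝ)
    (hδ0 : 0 < δ) (hδ1 : δ ≤ 1) (P : PartialOrder (Fin n))
    (hcomp : (compCount n P : ℝ) ≤ δ * ((n : ℝ) * ((n : ℝ) - 1) / 2)) :
    (Nat.factorial n : ℝ) * (2 / (δ * ((n : ℝ) - 1) + 2)) ^ n ≤ (linExtCount n P : ℝ) ∧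
    Real.exp (1 - 2 / δ) * (2 / (Real.exp 1 * δ)) ^ n ≤ (linExtCount n P : ℝ) :=
  linExtCount_ge_of_sparse_strong_general n hn δ hδ0 P hcomp
end

section
/- For every partially ordered set Q on n points, e(Q) ≥ n!·2^{−comp(Q)}. -/
lemma plt_trans {α} (P : PartialOrder α) {a b c : α} (h1 : P.lt a b) (h2 : P.lt b c) : P.lt a c :=
  @lt_trans α P.toPreorder a b c h1 h2

lemma plt_irrefl {α} (P : PartialOrder α) (a : α) : ¬ P.lt a a :=
  @lt_irrefl α P.toPreorder a

lemma plt_asymm {α} (P : PartialOrder α) {a b : α} (h : P.lt a b) : ¬ P.lt b a :=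
  @lt_asymm α P.toPreorder a b h

/-- The poset obtained from `P` by deleting a covering relation `x ⋖ y`. -/
def delPoset {α} (P : PartialOrder α) (x y : α)
    (hcov : ∀ z, ¬(P.lt x z ∧ P.lt z y)) : PartialOrder α where
  le a b := a = b ∨ (P.lt a b ∧ ¬(a = x ∧ b = y))
  lt a b := P.lt a b ∧ ¬(a = x ∧ b = y)
  le_refl a := Or.inl rfl
  le_trans a b c hab hbc := by
    rcases hab with rfl | ⟨h1, h2⟩
    · exact hbc
    rcases hbc with rfl | ⟨h3, h4⟩
    · exact Or.inr ⟨h1, h2⟩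
    refine Or.inr ⟨plt_trans P h1 h3, ?_⟩
    rintro ⟨rfl, rfl⟩
    exact hcov b ⟨h1, h3⟩
  le_antisymm a b hab hba := by
    rcases hab with rfl | ⟨h1, _⟩
    · rfl
    rcases hba with rfl | ⟨h3, _⟩
    · rfl
    exact absurd (plt_trans P h1 h3) (plt_irrefl P a)
  lt_iff_le_not_ge a b := by
    constructor
    · rintro ⟨h1, h2⟩
      refine ⟨Or.inr ⟨h1, h2⟩, ?_⟩
      rintro (rfl | ⟨h3, _⟩)
      · exact plt_irrefl P _ h1
      · exact plt_asymm P h1 h3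
    · rintro ⟨hab | ⟨h1, h2⟩, hba⟩
      · exact absurd (Or.inl hab.symm) hba
      · exact ⟨h1, h2⟩

lemma delPoset_lt_iff {α} (P : PartialOrder α) (x y : α)
    (hcov : ∀ z, ¬(P.lt x z ∧ P.lt z y)) (a b : α) :
    (delPoset P x y hcov).lt a b ↔ P.lt a b ∧ ¬(a = x ∧ b = y) := Iff.rfl

lemma linext_del (n : ℕ) (P : PartialOrder (Fin n)) (x y : Fin n) (hxy : P.lt x y)
    (hcov : ∀ z, ¬(P.lt x z ∧ P.lt z y)) :
    linExtCount n (delPoset P x y hcov) ≤ 2 * linExtCount n P := by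
  classical
  set P' := delPoset P x y hcov with hP'
  have hne : x ≠ y := fun h => plt_irrefl P x (h ▸ hxy)
  set A : Set (Fin n ≃ Fin n) := {f | ∀ a b, P'.lt a b → f a < f b} with hA
  set B : Set (Fin n ≃ Fin n) := {f | ∀ a b, P.lt a b → f a < f b} with hB
  set U : Set (Fin n ≃ Fin n) := {f | f x < f y} with hU
  have hcard1 : linExtCount n P' = A.ncard := Nat.card_coe_set_eq A
  have hcard2 : linExtCount n P = B.ncard := Nat.card_coe_set_eq B
  -- the first part: extensions with f x < f y
  have hsub1 : A ∩ U ⊆ B := by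
    rintro f ⟨hfA, hfU⟩ a b hab
    by_cases h : a = x ∧ b = y
    · obtain ⟨rfl, rfl⟩ := h
      exact hfU
    · exact hfA a b ⟨hab, h⟩
  -- the second part: extensions with f y < f x, mapped by swapping values of x and y
  set T : (Fin n ≃ Fin n) → (Fin n ≃ Fin n) := fun f => f.trans (Equiv.swap (f x) (f y)) with hT
  have hTx : ∀ f : Fin n ≃ Fin n, T f x = f y := by
    intro f; simp [hT, Equiv.trans_apply, Equiv.swap_apply_left]
  have hTy : ∀ f : Fin n ≃ Fin n, T f y = f x := by
    intro f; simp [hT, Equiv.trans_apply, Equiv.swap_apply_right]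
  have hTa : ∀ (f : Fin n ≃ Fin n) (a : Fin n), a ≠ x → a ≠ y → T f a = f a := by
    intro f a h1 h2
    simp [hT, Equiv.trans_apply,
      Equiv.swap_apply_of_ne_of_ne (f.injective.ne h1) (f.injective.ne h2)]
  have hinj : Set.InjOn T (A ∩ Uᶜ) := by
    intro f _ g _ h
    have h' : ∀ a, T f a = T g a := fun a => by rw [h]
    have e1 : f y = g y := by rw [← hTx f, ← hTx g, h]
    have e2 : f x = g x := by rw [← hTy f, ← hTy g, h]
    refine Equiv.ext fun a => ?_
    by_cases hax : a = x
    · rw [hax]; exact e2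
    by_cases hay : a = y
    · rw [hay]; exact e1
    · have := h' a
      rwa [hTa f a hax hay, hTa g a hax hay] at this
  have hsub2 : T '' (A ∩ Uᶜ) ⊆ B := by
    rintro _ ⟨f, ⟨hfA, hfU⟩, rfl⟩
    have hyx : f y < f x := by
      rcases (f.injective.ne hne).lt_or_gt with h | h
      · exact absurd h hfU
      · exact h
    intro a b hab
    by_cases hax : a = x
    · by_cases hby : b = y
      · rw [hax, hby, hTx, hTy]; exact hyx
      · have hbx : b ≠ x := fun h => plt_irrefl P x (by rw [hax, h] at hab; exact hab)
        rw [hax, hTx, hTa f b hbx hby]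
        exact Nat.lt_trans hyx (hfA x b ⟨by rwa [hax] at hab, by simp [hby]⟩)
    by_cases hay : a = y
    · have hbx : b ≠ x := fun h => plt_asymm P hxy (by rw [hay, h] at hab; exact hab)
      have hby : b ≠ y := fun h => plt_irrefl P y (by rw [hay, h] at hab; exact hab)
      rw [hay, hTy, hTa f b hbx hby]
      exact hfA x b ⟨plt_trans P hxy (by rwa [hay] at hab), by simp [hby]⟩
    by_cases hbx : b = x
    · rw [hbx, hTa f a hax hay, hTx]
      exact hfA a y ⟨plt_trans P (by rwa [hbx] at hab) hxy, by simp [hax]⟩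
    by_cases hby : b = y
    · rw [hby, hTa f a hax hay, hTy]
      exact Nat.lt_trans (hfA a y ⟨by rwa [hby] at hab, by simp [hax]⟩) hyx
    · rw [hTa f a hax hay, hTa f b hbx hby]
      exact hfA a b ⟨hab, by simp [hax]⟩
  calc linExtCount n P' = A.ncard := hcard1
    _ = ((A ∩ U) ∪ (A ∩ Uᶜ)).ncard := by rw [Set.inter_union_compl]
    _ ≤ (A ∩ U).ncard + (A ∩ Uᶜ).ncard := Set.ncard_union_le _ _
    _ = (A ∩ U).ncard + (T '' (A ∩ Uᶜ)).ncard := by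
        rw [Set.ncard_image_of_injOn hinj]
    _ ≤ B.ncard + B.ncard :=
        add_le_add (Set.ncard_le_ncard hsub1 (Set.toFinite B))
          (Set.ncard_le_ncard hsub2 (Set.toFinite B))
    _ = 2 * linExtCount n P := by rw [hcard2]; ring

lemma comp_del (n : ℕ) (P : PartialOrder (Fin n)) (x y : Fin n) (hxy : P.lt x y)
    (hcov : ∀ z, ¬(P.lt x z ∧ P.lt z y)) :
    compCount n (delPoset P x y hcov) + 1 = compCount n P := by
  have h1 : compCount n (delPoset P x y hcov)
      = ({p : Fin n × Fin n | P.lt p.1 p.2} \ {(x, y)}).ncard := by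
    rw [show compCount n (delPoset P x y hcov)
        = ({p : Fin n × Fin n | (delPoset P x y hcov).lt p.1 p.2}).ncard from
      Nat.card_coe_set_eq _]
    congr 1
    ext ⟨a, b⟩
    simp only [delPoset_lt_iff, Set.mem_setOf_eq, Set.mem_diff, Set.mem_singleton_iff,
      Prod.mk.injEq]
  have h2 : compCount n P = ({p : Fin n × Fin n | P.lt p.1 p.2}).ncard :=
    Nat.card_coe_set_eq _
  rw [h1, h2]
  exact Set.ncard_diff_singleton_add_one hxy (Set.toFinite _)

lemma aux_main_s8 (n : ℕ) : ∀ (c : ℕ) (P : PartialOrder (Fin n)), compCount n P = c →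
    (Nat.factorial n : ℝ) / 2 ^ c ≤ (linExtCount n P : ℝ) := by
  intro c
  induction c with
  | zero =>
    intro P hP
    have hempty : ∀ a b : Fin n, ¬ P.lt a b := by
      intro a b hab
      have hne : Nonempty {p : Fin n × Fin n // P.lt p.1 p.2} := ⟨⟨(a, b), hab⟩⟩
      have hpos : 0 < compCount n P := Nat.card_pos
      omega
    have he : linExtCount n P = Nat.factorial n := by
      rw [linExtCount, Nat.card_congr
        (Equiv.subtypeUnivEquiv (fun f a b h => absurd h (hempty a b))),
        Nat.card_eq_fintype_card]
      have : Fintype.card (Equiv.Perm (Fin n)) = (Fintype.card (Fin n)).factorial :=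
        Fintype.card_perm
      simpa using this
    rw [he]
    simp
  | succ c ih =>
    intro P hP
    classical
    have h0 : compCount n P ≠ 0 := by omega
    obtain ⟨⟨⟨p0, hp0⟩⟩, -⟩ := Nat.card_ne_zero.mp h0
    obtain ⟨p, hpT, hpmin⟩ := Finset.exists_min_image
      (Finset.univ.filter (fun p : Fin n × Fin n => P.lt p.1 p.2))
      (fun p => (Finset.univ.filter (fun z => P.lt p.1 z ∧ P.lt z p.2)).card)
      ⟨p0, by simp [hp0]⟩
    have hxy : P.lt p.1 p.2 := by simpa using hpT
    have hcov : ∀ z, ¬(P.lt p.1 z ∧ P.lt z p.2) := by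
      intro z hz
      have hmem : (p.1, z) ∈ Finset.univ.filter (fun p : Fin n × Fin n => P.lt p.1 p.2) := by
        simpa using hz.1
      have hle := hpmin _ hmem
      have hsub : (Finset.univ.filter (fun w => P.lt p.1 w ∧ P.lt w z))
          ⊆ (Finset.univ.filter (fun w => P.lt p.1 w ∧ P.lt w p.2)) := by
        intro w hw
        simp only [Finset.mem_filter, Finset.mem_univ, true_and] at hw ⊢
        exact ⟨hw.1, plt_trans P hw.2 hz.2⟩
      have hss : (Finset.univ.filter (fun w => P.lt p.1 w ∧ P.lt w z))
          ⊂ (Finset.univ.filter (fun w => P.lt p.1 w ∧ P.lt w p.2)) :=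
        (Finset.ssubset_iff_of_subset hsub).mpr
          ⟨z, by simpa using hz, by simp only [Finset.mem_filter, Finset.mem_univ, true_and]; exact fun h => plt_irrefl P z h.2⟩
      have hlt := Finset.card_lt_card hss
      simp only at hle hlt
      omega
    have hc' : compCount n (delPoset P p.1 p.2 hcov) = c := by
      have := comp_del n P p.1 p.2 hxy hcov
      omega
    have h1 := ih (delPoset P p.1 p.2 hcov) hc'
    have h2 : (linExtCount n (delPoset P p.1 p.2 hcov) : ℝ) ≤ 2 * linExtCount n P := by
      exact_mod_cast linext_del n P p.1 p.2 hxy hcov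
    have hpow : (0:ℝ) < 2 ^ c := by positivity
    rw [pow_succ]
    have e1 : (Nat.factorial n : ℝ) / (2 ^ c * 2) = ((Nat.factorial n : ℝ) / 2 ^ c) / 2 := by
      ring
    rw [e1]
    linarith

theorem linExtCount_ge_two_pow_comp (n : ℕ) (P : PartialOrder (Fin n)) :
    (Nat.factorial n : ℝ) / 2 ^ compCount n P ≤ (linExtCount n P : ℝ) := by
  exact aux_main_s8 n (compCount n P) P rfl
end

section
/- Let δ : ℕ → ℝ satisfy δ(n) > 0 for all n and δ(n) → 0 as n → ∞. Then there exist constants K₁, K₂ > 0 and N such that for all n ≥ N, K₁·min{1/δ(n), n} ≤ (f⁻(n,δ(n)))^{1/n} ≤ K₂·min{1/δ(n), n}. -/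
/-- `f⁻(n, δ)`: the minimum number of linear extensions over partial orders on
`n` points with at most `δ·n(n-1)/2` comparable pairs. -/
noncomputable def fMinus (n : ℕ) (δ : ℝ) : ℕ :=
  sInf {m : ℕ | ∃ P : PartialOrder (Fin n),
    (compCount n P : ℝ) ≤ δ * ((n : ℝ) * ((n : ℝ) - 1) / 2) ∧ linExtCount n P = m}

/-!
Lower bound: placing a maximal element `x` last identifies the linear extensions of `P - x`
with those of `P` ending in `x`; since the down-sets of the maximal elements cover `P`, induction
gives `n! ≤ e(P) · ∏ₓ (#{y < x} + 1)`. By AM-GM the product is at most `((n + comp P) / n)ⁿ`,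
and with `nⁿ ≤ eⁿ n!` this yields `e(P)^(1/n) ≥ n² / (e (n + comp P))`, which is of order
`min (1/δ) n` when `comp P ≤ δ n² / 2`.

Upper bound: a disjoint union of chains of length `L ≈ δ n / 2` has at most `n (L - 1)`
comparable pairs, and each of its linear extensions is determined by the sequence of chains it
visits, so it has at most `(n / L + 1)ⁿ` linear extensions.
-/

open Finset
open scoped Nat

abbrev LinExt (α : Type*) [Preorder α] (n : ℕ) :=
  {f : α ≃ Fin n // ∀ x y : α, x < y → f x < f y}

section ExtendLast

variable {α : Type*} [DecidableEq α] {m : ℕ}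

def Equiv.extendLast (x : α) (g : {y // y ≠ x} ≃ Fin m) : α ≃ Fin (m + 1) :=
  ((Equiv.optionSubtypeNe x).symm.trans g.optionCongr).trans finSuccEquivLast.symm

@[simp] lemma Equiv.extendLast_self (x : α) (g : {y // y ≠ x} ≃ Fin m) :
    Equiv.extendLast x g x = Fin.last m := by
  simp [Equiv.extendLast]

lemma Equiv.extendLast_of_ne {x y : α} (hy : y ≠ x) (g : {y // y ≠ x} ≃ Fin m) :
    Equiv.extendLast x g y = (g ⟨y, hy⟩).castSucc := by
  simp [Equiv.extendLast, Equiv.optionSubtypeNe_symm_of_ne hy]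

end ExtendLast

section FiniteOrder

variable {α : Type*} [PartialOrder α]

lemma card_linExt_succ_eq_sum [Fintype α] (m : ℕ) :
    Nat.card (LinExt α (m + 1)) =
      ∑ x, Nat.card {f : LinExt α (m + 1) // f.1.symm (Fin.last m) = x} := by
  rw [← Nat.card_sigma]
  exact Nat.card_congr (Equiv.sigmaFiberEquiv _).symm

lemma card_linExt_ne_le_card_fiber [Fintype α] [DecidableEq α] {x : α} (hx : IsMax x)
    (m : ℕ) :
    Nat.card (LinExt {y // y ≠ x} m) ≤
      Nat.card {f : LinExt α (m + 1) // f.1.symm (Fin.last m) = x} := by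
  have hmono (g : LinExt {y // y ≠ x} m) :
      ∀ a b : α, a < b → Equiv.extendLast x g.1 a < Equiv.extendLast x g.1 b := by
    intro a b hab
    have ha : a ≠ x := by rintro rfl; exact hx.not_lt hab
    by_cases hb : b = x
    · subst hb
      simp [Equiv.extendLast_of_ne ha, Fin.castSucc_lt_last]
    · simpa [Equiv.extendLast_of_ne ha, Equiv.extendLast_of_ne hb] using
        g.2 ⟨a, ha⟩ ⟨b, hb⟩ hab
  refine Nat.card_le_card_of_injective
    (fun g => ⟨⟨Equiv.extendLast x g.1, hmono g⟩, by simp [Equiv.symm_apply_eq]⟩) ?_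
  intro g g' h
  refine Subtype.ext <| Equiv.ext fun y => ?_
  simpa [Equiv.extendLast_of_ne y.2] using congrArg (fun f => f.1.1 y.1) h

open scoped Classical in
lemma card_le_sum_card_Iio_isMax [Fintype α] :
    Fintype.card α ≤ ∑ x : α with IsMax x, (Nat.card {y // y < x} + 1) := by
  have hIic (x : α) : #{y | y ≤ x} = Nat.card {y // y < x} + 1 := by
    rw [Nat.card_eq_fintype_card, Fintype.card_subtype,
      ← card_insert_of_notMem (a := x) (by simp)]
    congr 1
    ext y
    simp [le_iff_eq_or_lt]
  have hcover : univ ⊆ ({x | IsMax x} : Finset α).biUnion fun x => {y | y ≤ x} := by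
    intro y _
    obtain ⟨x, hyx, hx⟩ := Finite.exists_le_maximal (p := fun _ : α => True) (a := y) trivial
    simpa using ⟨x, fun z hz => hx.2 trivial hz, hyx⟩
  calc Fintype.card α ≤ #(({x | IsMax x} : Finset α).biUnion fun x => {y | y ≤ x}) :=
        card_le_card hcover
    _ ≤ _ := card_biUnion_le.trans_eq (sum_congr rfl fun x _ => hIic x)

lemma card_Iio_subtype_ne {x : α} (hx : IsMax x) (y : {y // y ≠ x}) :
    Nat.card {z : {y // y ≠ x} // z < y} = Nat.card {z // z < y.1} :=
  Nat.card_congr ⟨fun z => ⟨z.1.1, z.2⟩,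
    fun z => ⟨⟨z.1, fun h => hx.not_lt (h ▸ z.2)⟩, z.2⟩, fun _ => rfl, fun _ => rfl⟩

theorem factorial_le_card_linExt_mul_prod [Fintype α] (n : ℕ) (hα : Fintype.card α = n) :
    n ! ≤ Nat.card (LinExt α n) * ∏ x : α, (Nat.card {y // y < x} + 1) := by
  classical
  induction n generalizing α with
  | zero =>
    have : IsEmpty α := Fintype.card_eq_zero_iff.mp hα
    have : Nonempty (LinExt α 0) :=
      ⟨⟨Equiv.equivOfIsEmpty α (Fin 0), fun a => isEmptyElim a⟩⟩
    simp [Nat.one_le_iff_ne_zero]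
  | succ m ih =>
    set c : α → ℕ := fun x => Nat.card {y // y < x} + 1
    set fiber : α → ℕ := fun x => Nat.card {f : LinExt α (m + 1) // f.1.symm (Fin.last m) = x}
    have hfiber (x : α) (hx : IsMax x) : m ! * c x ≤ fiber x * ∏ y, c y := by
      have hcard : Fintype.card {y // y ≠ x} = m := by
        simp [Fintype.card_subtype_compl, hα]
      calc m ! * c x ≤ Nat.card (LinExt {y // y ≠ x} m) * (∏ y : {y // y ≠ x}, c y) * c x := by
            gcongr
            simpa only [card_Iio_subtype_ne hx] using ih hcard
        _ = Nat.card (LinExt {y // y ≠ x} m) * ∏ y, c y := by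
            rw [Fintype.prod_eq_mul_prod_subtype_ne c x]; ring
        _ ≤ fiber x * ∏ y, c y := by
            gcongr
            exact card_linExt_ne_le_card_fiber hx m
    calc (m + 1)! = m ! * (m + 1) := by rw [Nat.factorial_succ, mul_comm]
      _ ≤ m ! * ∑ x : α with IsMax x, c x := by
          gcongr
          exact hα ▸ card_le_sum_card_Iio_isMax
      _ = ∑ x : α with IsMax x, m ! * c x := mul_sum ..
      _ ≤ ∑ x : α with IsMax x, fiber x * ∏ y, c y :=
          sum_le_sum fun x hx => hfiber x (mem_filter.1 hx).2
      _ ≤ ∑ x, fiber x * ∏ y, c y := sum_le_sum_of_subset (filter_subset ..)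
      _ = Nat.card (LinExt α (m + 1)) * ∏ y, c y := by
          rw [← sum_mul, card_linExt_succ_eq_sum]

lemma card_lt_pairs_eq_sum [Fintype α] :
    Nat.card {p : α × α // p.1 < p.2} = ∑ x : α, Nat.card {y // y < x} := by
  rw [← Nat.card_sigma]
  exact Nat.card_congr ⟨fun p => ⟨p.1.2, p.1.1, p.2⟩, fun q => ⟨(q.2.1, q.1), q.2.2⟩,
    fun _ => rfl, fun _ => rfl⟩

end FiniteOrder

lemma prod_le_sum_div_card_pow {ι : Type*} (s : Finset ι) (z : ι → ℝ) (hz : ∀ i ∈ s, 0 ≤ z i) :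
    ∏ i ∈ s, z i ≤ ((∑ i ∈ s, z i) / #s) ^ #s := by
  rcases s.eq_empty_or_nonempty with rfl | hs
  · simp
  have hcard : (0 : ℝ) < #s := by exact_mod_cast hs.card_pos
  have amgm := Real.geom_mean_le_arith_mean_weighted s (fun _ => (#s : ℝ)⁻¹) z
    (fun _ _ => by positivity) (by simp [hcard.ne']) hz
  rwa [Real.finsetProd_rpow s z hz, ← mul_sum, inv_mul_eq_div,
    Real.rpow_inv_le_iff_of_pos (prod_nonneg hz) (div_nonneg (sum_nonneg hz) hcard.le) hcard,
    Real.rpow_natCast] at amgm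

lemma pow_le_exp_pow_mul_factorial (n : ℕ) : (n : ℝ) ^ n ≤ Real.exp 1 ^ n * n ! := by
  have := Real.pow_div_factorial_le_exp (n : ℝ) (Nat.cast_nonneg n) n
  rwa [div_le_iff₀ (by positivity), ← Real.exp_one_pow] at this

theorem pow_le_card_linExt {α : Type*} [Fintype α] [PartialOrder α] (n : ℕ)
    (hα : Fintype.card α = n) :
    ((n : ℝ) ^ 2 / (Real.exp 1 * (n + Nat.card {p : α × α // p.1 < p.2}))) ^ n ≤
      Nat.card (LinExt α n) := by
  set C : ℝ := ((Nat.card {p : α × α // p.1 < p.2} : ℕ) : ℝ)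
  have hprod : ∏ x : α, ((Nat.card {y // y < x} + 1 : ℕ) : ℝ) ≤ ((n + C) / n) ^ n := by
    have hsum : ∑ x : α, ((Nat.card {y // y < x} + 1 : ℕ) : ℝ) = n + C := by
      simp only [C, card_lt_pairs_eq_sum, Nat.cast_sum, Nat.cast_add, Nat.cast_one,
        sum_add_distrib, sum_const, Finset.card_univ, hα, nsmul_eq_mul, mul_one, add_comm]
    simpa only [hsum, Finset.card_univ, hα] using
      prod_le_sum_div_card_pow univ (fun x : α => ((Nat.card {y // y < x} + 1 : ℕ) : ℝ))
        fun _ _ => Nat.cast_nonneg _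
  have hfact : (n ! : ℝ) ≤ Nat.card (LinExt α n) * ((n + C) / n) ^ n :=
    calc (n ! : ℝ)
        ≤ Nat.card (LinExt α n) * ∏ x : α, ((Nat.card {y // y < x} + 1 : ℕ) : ℝ) := by
          exact_mod_cast factorial_le_card_linExt_mul_prod n hα
      _ ≤ Nat.card (LinExt α n) * ((n + C) / n) ^ n := by gcongr
  have hcancel : ((n + C) / n * (n / (n + C))) ^ n = 1 := by
    rcases n.eq_zero_or_pos with rfl | hn
    · simp
    · rw [div_mul_div_comm, mul_comm, div_self (by positivity), one_pow]
  calc ((n : ℝ) ^ 2 / (Real.exp 1 * (n + C))) ^ n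
      = (n : ℝ) ^ n / Real.exp 1 ^ n * (n / (n + C)) ^ n := by
        rw [sq, ← div_mul_div_comm, mul_pow, div_pow]
    _ ≤ n ! * (n / (n + C)) ^ n := by
        gcongr
        rw [div_le_iff₀ (by positivity), mul_comm]
        exact pow_le_exp_pow_mul_factorial n
    _ ≤ Nat.card (LinExt α n) * ((n + C) / n) ^ n * (n / (n + C)) ^ n := by gcongr
    _ = Nat.card (LinExt α n) := by rw [mul_assoc, ← mul_pow, hcancel, mul_one]

section Determination

variable {α : Type*} [PartialOrder α] {n : ℕ}

lemma LinExt.not_symm_lt_symm_of_forall_lt {f f' : LinExt α n} {t : Fin n}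
    (h : ∀ s < t, f.1.symm s = f'.1.symm s) : ¬ f.1.symm t < f'.1.symm t := by
  intro hlt
  have hlt' : f'.1 (f.1.symm t) < t := by simpa using f'.2 _ _ hlt
  exact hlt'.ne (f.1.symm.injective (by simpa using h _ hlt'))

theorem LinExt.comp_symm_injective {β : Type*} (g : α → β)
    (hg : ∀ a b, g a = g b → a ≤ b ∨ b ≤ a) :
    Function.Injective fun f : LinExt α n => g ∘ f.1.symm := by
  intro f f' h
  have hsymm (t : Fin n) : f.1.symm t = f'.1.symm t := by
    induction t using WellFoundedLT.induction with
    | _ t ih =>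
      rcases hg _ _ (congrFun h t) with hle | hle
      · exact hle.eq_or_lt.resolve_right (not_symm_lt_symm_of_forall_lt ih)
      · exact (hle.eq_or_lt.resolve_right
          (not_symm_lt_symm_of_forall_lt fun s hs => (ih s hs).symm)).symm
  exact Subtype.ext <| Equiv.symm_bijective.injective <| Equiv.ext hsymm

end Determination

lemma Nat.sub_lt_of_div_eq_div {a b L : ℕ} (hL : 0 < L) (h : a / L = b / L) : b - a < L := by
  have ha := Nat.div_add_mod a L
  have hb := Nat.div_add_mod b L
  have := Nat.mod_lt b hL
  rw [h] at ha
  omega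

/-- The disjoint union of the chains `{0, …, L - 1}, {L, …, 2L - 1}, …` in `Fin n`. -/
@[reducible] def blockOrder (n L : ℕ) : PartialOrder (Fin n) where
  le x y := x.val / L = y.val / L ∧ x ≤ y
  lt x y := x.val / L = y.val / L ∧ x < y
  le_refl _ := ⟨rfl, le_rfl⟩
  le_trans _ _ _ hxy hyz := ⟨hxy.1.trans hyz.1, hxy.2.trans hyz.2⟩
  le_antisymm _ _ hxy hyx := le_antisymm hxy.2 hyx.2
  lt_iff_le_not_ge x y := by
    constructor
    · exact fun ⟨h, hlt⟩ => ⟨⟨h, hlt.le⟩, fun h' => hlt.not_ge h'.2⟩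
    · exact fun ⟨⟨h, hle⟩, hn⟩ => ⟨h, hle.lt_of_ne fun hxy => hn ⟨hxy ▸ rfl, hxy ▸ le_rfl⟩⟩

section BlockOrder

variable {n L : ℕ}

lemma card_lt_blockOrder_le (hL : 0 < L) (x : Fin n) :
    Nat.card {y // (blockOrder n L).lt y x} ≤ L - 1 := by
  refine (Nat.card_le_card_of_injective (β := Fin (L - 1))
    (fun y => ⟨x.val - y.1.val - 1, ?_⟩) ?_).trans_eq (Nat.card_fin _)
  · obtain ⟨y, hblock, hyx⟩ := y
    have := Nat.sub_lt_of_div_eq_div hL hblock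
    show x.val - y.val - 1 < L - 1
    omega
  · rintro ⟨y, -, hyx⟩ ⟨y', -, hyx'⟩
    intro h
    have : x.val - y.val - 1 = x.val - y'.val - 1 := congrArg Fin.val h
    exact Subtype.ext (Fin.ext (show y.val = y'.val by omega))

lemma compCount_blockOrder_le (hL : 0 < L) : compCount n (blockOrder n L) ≤ n * (L - 1) :=
  calc compCount n (blockOrder n L)
      = ∑ x : Fin n, Nat.card {y // (blockOrder n L).lt y x} :=
        @card_lt_pairs_eq_sum _ (blockOrder n L) _
    _ ≤ ∑ _x : Fin n, (L - 1) := sum_le_sum fun x _ => card_lt_blockOrder_le hL x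
    _ = n * (L - 1) := by simp

lemma linExtCount_blockOrder_le (n L : ℕ) :
    linExtCount n (blockOrder n L) ≤ (n / L + 1) ^ n := by
  let block : Fin n → Fin (n / L + 1) := fun x =>
    ⟨x.val / L, Nat.lt_succ_of_le (Nat.div_le_div_right x.2.le)⟩
  have hblock (a b : Fin n) (h : block a = block b) :
      (blockOrder n L).le a b ∨ (blockOrder n L).le b a :=
    (le_total a b).imp (fun hab => ⟨Fin.mk.inj h, hab⟩) (fun hba => ⟨(Fin.mk.inj h).symm, hba⟩)
  calc linExtCount n (blockOrder n L) ≤ Nat.card (Fin n → Fin (n / L + 1)) :=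
        Nat.card_le_card_of_injective _
          (@LinExt.comp_symm_injective _ (blockOrder n L) _ _ block hblock)
    _ = (n / L + 1) ^ n := by simp

end BlockOrder

section Bounds

variable {n : ℕ} {δ : ℝ}

lemma fMinus_le_linExtCount (P : PartialOrder (Fin n))
    (hP : (compCount n P : ℝ) ≤ δ * (n * (n - 1) / 2)) : fMinus n δ ≤ linExtCount n P :=
  Nat.sInf_le ⟨P, hP, rfl⟩

lemma exists_linExtCount_eq_fMinus (P : PartialOrder (Fin n))
    (hP : (compCount n P : ℝ) ≤ δ * (n * (n - 1) / 2)) :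
    ∃ Q : PartialOrder (Fin n),
      (compCount n Q : ℝ) ≤ δ * (n * (n - 1) / 2) ∧ linExtCount n Q = fMinus n δ :=
  Nat.sInf_mem (s := {m | ∃ Q : PartialOrder (Fin n),
    (compCount n Q : ℝ) ≤ δ * (n * (n - 1) / 2) ∧ linExtCount n Q = m}) ⟨_, P, hP, rfl⟩

lemma mul_min_le_rpow_inv_linExtCount (hn : 0 < n) (hδ : 0 < δ) (P : PartialOrder (Fin n))
    (hP : (compCount n P : ℝ) ≤ δ * (n * (n - 1) / 2)) :
    2 / (3 * Real.exp 1) * min (1 / δ) n ≤ (linExtCount n P : ℝ) ^ (n : ℝ)⁻¹ := by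
  set C : ℝ := (compCount n P : ℝ)
  set M := min (1 / δ) (n : ℝ)
  have hnR : (0 : ℝ) < n := by exact_mod_cast hn
  have hC : 0 ≤ C := Nat.cast_nonneg _
  have hM : 0 ≤ M := le_min (by positivity) hnR.le
  have hMC : M * (n + C) ≤ 3 / 2 * n ^ 2 := by
    have hMn : M ≤ n := min_le_right _ _
    have hδM : δ * M ≤ 1 := by
      have := min_le_left (1 / δ) (n : ℝ)
      rwa [le_div_iff₀ hδ, mul_comm] at this
    have hCn : C ≤ δ * n ^ 2 / 2 := hP.trans (by nlinarith)
    nlinarith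
  have hpow : ((n : ℝ) ^ 2 / (Real.exp 1 * (n + C))) ^ n ≤ linExtCount n P :=
    @pow_le_card_linExt (Fin n) _ P n (Fintype.card_fin n)
  calc 2 / (3 * Real.exp 1) * M ≤ (n : ℝ) ^ 2 / (Real.exp 1 * (n + C)) := by
        rw [le_div_iff₀ (by positivity)]
        have : 2 / (3 * Real.exp 1) * M * (Real.exp 1 * (n + C)) = 2 / 3 * (M * (n + C)) := by
          field_simp
        linarith
    _ ≤ (linExtCount n P : ℝ) ^ (n : ℝ)⁻¹ := by
        rwa [Real.le_rpow_inv_iff_of_pos (by positivity) (by positivity) hnR, Real.rpow_natCast]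

lemma mul_min_le_rpow_inv_fMinus (hn : 0 < n) (hδ : 0 < δ) :
    2 / (3 * Real.exp 1) * min (1 / δ) n ≤ (fMinus n δ : ℝ) ^ (n : ℝ)⁻¹ := by
  have hantichain : (compCount n (blockOrder n 1) : ℝ) ≤ δ * (n * (n - 1) / 2) := by
    have hzero : compCount n (blockOrder n 1) = 0 := by
      simpa using compCount_blockOrder_le (n := n) one_pos
    have hn1 : (1 : ℝ) ≤ n := by exact_mod_cast hn
    rw [hzero, Nat.cast_zero]
    positivity
  obtain ⟨P, hP, hPe⟩ := exists_linExtCount_eq_fMinus _ hantichain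
  rw [← hPe]
  exact mul_min_le_rpow_inv_linExtCount hn hδ P hP

lemma rpow_inv_fMinus_le (hn : 2 ≤ n) (hδ0 : 0 < δ) (hδ1 : δ < 1) :
    (fMinus n δ : ℝ) ^ (n : ℝ)⁻¹ ≤ 5 * min (1 / δ) n := by
  have hnR : (2 : ℝ) ≤ n := by exact_mod_cast hn
  set r := δ * ((n : ℝ) - 1) / 2 with hr
  have hr0 : 0 ≤ r := div_nonneg (mul_nonneg hδ0.le (by linarith)) zero_le_two
  set L := ⌊r⌋₊ + 1
  have hLgt : r < L := by simpa [L] using Nat.lt_floor_add_one r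
  have hcomp : (compCount n (blockOrder n L) : ℝ) ≤ δ * (n * (n - 1) / 2) := by
    have hcount : compCount n (blockOrder n L) ≤ n * ⌊r⌋₊ :=
      compCount_blockOrder_le (Nat.succ_pos _)
    calc (compCount n (blockOrder n L) : ℝ) ≤ n * ⌊r⌋₊ := by exact_mod_cast hcount
      _ ≤ n * r := by gcongr; exact Nat.floor_le hr0
      _ = δ * (n * (n - 1) / 2) := by ring
  have hfM : fMinus n δ ≤ (n / L + 1) ^ n :=
    (fMinus_le_linExtCount _ hcomp).trans (linExtCount_blockOrder_le n L)
  have hroot : (fMinus n δ : ℝ) ^ (n : ℝ)⁻¹ ≤ ((n / L : ℕ) : ℝ) + 1 := by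
    rw [Real.rpow_inv_le_iff_of_pos (by positivity) (by positivity) (by positivity),
      Real.rpow_natCast]
    exact_mod_cast hfM
  have hdiv : ((n / L : ℕ) : ℝ) ≤ 4 * (1 / δ) := by
    refine Nat.cast_div_le.trans ?_
    rw [mul_one_div, div_le_div_iff₀ (by positivity) hδ0]
    nlinarith [mul_nonneg hδ0.le (sub_nonneg.2 hnR)]
  have hdivn : ((n / L : ℕ) : ℝ) ≤ n := by exact_mod_cast Nat.div_le_self n L
  have hδinv : 1 ≤ 1 / δ := by rw [le_div_iff₀ hδ0]; linarith
  rw [mul_min_of_nonneg _ _ (by norm_num)]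
  exact hroot.trans (le_min (by linarith) (by linarith))

end Bounds

theorem fminus_rate_delta_to_zero (δ : ℕ → ℝ)
    (hδ : ∀ n, 0 < δ n)
    (hlim : Filter.Tendsto δ Filter.atTop (nhds 0)) :
    ∃ K₁ K₂ : ℝ, ∃ N : ℕ, 0 < K₁ ∧ 0 < K₂ ∧
      ∀ n : ℕ, N ≤ n →
        K₁ * min (1 / δ n) (n : ℝ) ≤ ((fMinus n (δ n) : ℝ)) ^ ((n : ℝ)⁻¹) ∧
        ((fMinus n (δ n) : ℝ)) ^ ((n : ℝ)⁻¹) ≤ K₂ * min (1 / δ n) (n : ℝ) := by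
  obtain ⟨N₀, hN₀⟩ := Filter.eventually_atTop.mp (hlim.eventually_lt_const one_pos)
  refine ⟨2 / (3 * Real.exp 1), 5, max N₀ 2, by positivity, by norm_num, fun n hn => ⟨?_, ?_⟩⟩
  · exact mul_min_le_rpow_inv_fMinus (by omega) (hδ n)
  · exact rpow_inv_fMinus_le (le_of_max_le_right hn) (hδ n) (hN₀ n (le_of_max_le_left hn))
end

section
/- Let Z denote the number of comparable pairs of the random interval order P_n on n points, i.e. the number of unordered pairs {i,j} of distinct indices with i ≺ j or j ≺ i. Then for every 0 < a < 1, the probability that |Z − (1/3)·n(n−1)/2| ≥ a·n(n−1)/2 is at most 2·exp(−a²n/2). -/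
open MeasureTheory

/-- The probability space for `n` random intervals: the `2n` endpoints are
i.i.d. uniform on `[0,1]`; we record them as `n` pairs of reals, with the
product of uniform (restricted Lebesgue) measures. -/
noncomputable def intervalMeasure (n : ℕ) : Measure (Fin n → ℝ × ℝ) :=
  Measure.pi fun _ =>
    (volume.restrict (Set.Icc (0 : ℝ) 1)).prod (volume.restrict (Set.Icc (0 : ℝ) 1))

/-- The strict order relation of the interval order: `i ≺ j` iff the interval
with endpoints `(ω i).1, (ω i).2` lies entirely to the left of the interval
with endpoints `(ω j).1, (ω j).2`. -/
def intervalLT (n : ℕ) (ω : Fin n → ℝ × ℝ) (i j : Fin n) : Prop :=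
  max (ω i).1 (ω i).2 < min (ω j).1 (ω j).2

/-- The number of linear extensions of the interval order determined by `ω`. -/
noncomputable def intervalLinExt (n : ℕ) (ω : Fin n → ℝ × ℝ) : ℕ :=
  Nat.card {f : Fin n ≃ Fin n // ∀ i j : Fin n, intervalLT n ω i j → f i < f j}

/-- The number of comparable pairs of the interval order determined by `ω`. -/
noncomputable def intervalComp (n : ℕ) (ω : Fin n → ℝ × ℝ) : ℕ :=
  Nat.card {p : Fin n × Fin n // intervalLT n ω p.1 p.2}

/-!
Write `Z = ∑ i, ∑ j, χ (ωᵢ, ωⱼ)`, where `χ` is the indicator that the first interval lies left of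
the second. Replacing one interval only affects the `n - 1` pairs containing it, and for each of
them at most one of the two orders holds, so `Z` has bounded differences `n - 1`. McDiarmid's
inequality, proved by induction on `n` by applying Hoeffding's lemma to the first coordinate with
the others fixed, then gives `P(|Z - 𝔼Z| ≥ ε) ≤ 2 exp (-2ε² / (n (n - 1)²))`. By independence
`𝔼Z = n (n - 1) P(u ≺ v)`, and `P(u ≺ v) = 𝔼 (1 - max u)² = 1/6`. Taking `ε = a n (n - 1) / 2`
gives the exponent `a² n / 2`; for `n ≤ 1` the bound is at least `2 exp (-1/2) > 1`.
-/

open ProbabilityTheory Real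

def HasBoundedDifferences {ι α : Type*} [DecidableEq ι] (f : (ι → α) → ℝ) (c : ι → ℝ) : Prop :=
  ∀ i ω x x', f (Function.update ω i x) - f (Function.update ω i x') ≤ c i

namespace HasBoundedDifferences

variable {ι α : Type*} [DecidableEq ι] {f : (ι → α) → ℝ} {c : ι → ℝ}

lemma sub_le_sum [Fintype ι] (hf : HasBoundedDifferences f c) (ω ω' : ι → α) :
    f ω' - f ω ≤ ∑ i, c i := by
  suffices ∀ s : Finset ι, f (s.piecewise ω' ω) - f ω ≤ ∑ i ∈ s, c i by
    simpa using this Finset.univ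
  intro s
  induction s using Finset.induction_on with
  | empty => simp
  | insert i s hi ih =>
    have hi' := hf i (s.piecewise ω' ω) (ω' i) (s.piecewise ω' ω i)
    rw [Function.update_eq_self] at hi'
    rw [Finset.piecewise_insert, Finset.sum_insert hi]
    linarith

lemma exists_mem_Icc [Fintype ι] (hf : HasBoundedDifferences f c) :
    ∃ a b, ∀ ω, f ω ∈ Set.Icc a b := by
  rcases isEmpty_or_nonempty (ι → α) with h | ⟨⟨ω₀⟩⟩
  · exact ⟨0, 0, fun ω => h.elim ω⟩
  · refine ⟨f ω₀ - ∑ i, c i, f ω₀ + ∑ i, c i, fun ω => ⟨?_, ?_⟩⟩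
    · linarith [hf.sub_le_sum ω ω₀]
    · linarith [hf.sub_le_sum ω₀ ω]

end HasBoundedDifferences

lemma mem_Icc_ciInf_of_sub_le {β : Type*} [Nonempty β] {h : β → ℝ} {c : ℝ}
    (hc : ∀ x x', h x - h x' ≤ c) (x : β) : h x ∈ Set.Icc (⨅ x, h x) ((⨅ x, h x) + c) := by
  have hbdd : BddBelow (Set.range h) := ⟨h x - c, by rintro _ ⟨x', rfl⟩; linarith [hc x x']⟩
  refine ⟨ciInf_le hbdd x, ?_⟩
  have : h x - c ≤ ⨅ x, h x := le_ciInf fun x' => by linarith [hc x x']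
  linarith

lemma integral_exp_mul_le_of_mem_Icc {Ω : Type*} [MeasurableSpace Ω] {μ : Measure Ω}
    [IsProbabilityMeasure μ] {X : Ω → ℝ} {a b : ℝ} (hm : AEMeasurable X μ)
    (hb : ∀ᵐ ω ∂μ, X ω ∈ Set.Icc a b) (t : ℝ) :
    ∫ ω, exp (t * X ω) ∂μ ≤ exp (t * μ[X]) * exp ((b - a) ^ 2 * t ^ 2 / 8) := by
  have h := (hasSubgaussianMGF_of_mem_Icc hm hb).mgf_le t
  have hc : (((‖b - a‖₊ / 2) ^ 2 : NNReal) : ℝ) = (b - a) ^ 2 / 4 := by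
    push_cast
    rw [Real.norm_eq_abs, div_pow, sq_abs]
    ring
  rw [hc, show (fun ω => X ω - μ[X]) = fun ω => X ω + -μ[X] from funext fun _ => sub_eq_add_neg _ _,
    mgf_add_const] at h
  calc ∫ ω, exp (t * X ω) ∂μ = exp (t * μ[X]) * (mgf X μ t * exp (t * -μ[X])) := by
        rw [mul_left_comm, ← exp_add, mul_neg, add_neg_cancel, exp_zero, mul_one, mgf]
    _ ≤ exp (t * μ[X]) * exp ((b - a) ^ 2 / 4 * t ^ 2 / 2) := by gcongr
    _ = exp (t * μ[X]) * exp ((b - a) ^ 2 * t ^ 2 / 8) := by ring_nf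

lemma integral_pi_fin_succ {n : ℕ} {α : Type*} [MeasurableSpace α] (ν : Fin (n + 1) → Measure α)
    [∀ i, SigmaFinite (ν i)] (F : (Fin (n + 1) → α) → ℝ) :
    ∫ ω, F ω ∂Measure.pi ν =
      ∫ z, F (Fin.cons z.1 z.2) ∂(ν 0).prod (Measure.pi fun i => ν i.succ) := by
  rw [← ((measurePreserving_piFinSuccAbove ν 0).symm).integral_comp']
  simp_rw [MeasurableEquiv.piFinSuccAbove_symm_apply, Fin.insertNthEquiv, Equiv.coe_fn_mk,
    Fin.insertNth_zero', Fin.zero_succAbove]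

lemma measurable_fin_cons {n : ℕ} {α : Type*} [MeasurableSpace α] :
    Measurable fun z : α × (Fin n → α) => (Fin.cons z.1 z.2 : Fin (n + 1) → α) := by
  refine measurable_pi_iff.2 fun i => ?_
  cases i using Fin.cases with
  | zero => simpa using measurable_fst
  | succ i => simp only [Fin.cons_succ]; fun_prop

lemma HasBoundedDifferences.sub_cons_le {α : Type*} {n : ℕ} {f : (Fin (n + 1) → α) → ℝ}
    {c : Fin (n + 1) → ℝ} (hf : HasBoundedDifferences f c) (x x' : α) (y : Fin n → α) :
    f (Fin.cons x y) - f (Fin.cons x' y) ≤ c 0 := by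
  simpa [Fin.update_cons_zero] using hf 0 (Fin.cons x' y) x x'

section ConsSlices

variable {α : Type*} [MeasurableSpace α] {n : ℕ} {f : (Fin (n + 1) → α) → ℝ}
  {c : Fin (n + 1) → ℝ} (ν : Measure α) [IsProbabilityMeasure ν]

lemma HasBoundedDifferences.integral_cons (hmeas : Measurable f)
    (hf : HasBoundedDifferences f c) :
    HasBoundedDifferences (fun y => ∫ x, f (Fin.cons x y) ∂ν) fun i => c i.succ := by
  obtain ⟨a, b, hab⟩ := hf.exists_mem_Icc
  have hint (y : Fin n → α) : Integrable (fun x => f (Fin.cons x y)) ν :=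
    .of_mem_Icc a b (hmeas.comp (measurable_fin_cons.comp measurable_prodMk_right)).aemeasurable
      (ae_of_all _ fun x => hab _)
  intro i y z z'
  rw [← integral_sub (hint _) (hint _)]
  calc _ ≤ ∫ _x, c i.succ ∂ν :=
        integral_mono ((hint _).sub (hint _)) (integrable_const _) fun x => by
          simpa [Fin.cons_update] using hf i.succ (Fin.cons x y) z z'
    _ = c i.succ := by simp

lemma integral_exp_mul_cons_le (hmeas : Measurable f) (hf : HasBoundedDifferences f c) (t : ℝ)
    (y : Fin n → α) :
    ∫ x, exp (t * f (Fin.cons x y)) ∂ν ≤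
      exp (t * ∫ x, f (Fin.cons x y) ∂ν) * exp (c 0 ^ 2 * t ^ 2 / 8) := by
  have : Nonempty α := nonempty_of_isProbabilityMeasure ν
  simpa using integral_exp_mul_le_of_mem_Icc
    (hmeas.comp (measurable_fin_cons.comp measurable_prodMk_right)).aemeasurable
    (ae_of_all _ (mem_Icc_ciInf_of_sub_le fun x x' => hf.sub_cons_le x x' y)) t

end ConsSlices

theorem integral_exp_mul_le_of_hasBoundedDifferences {α : Type*} [MeasurableSpace α] :
    ∀ {n : ℕ} (ν : Fin n → Measure α) [∀ i, IsProbabilityMeasure (ν i)]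
      {f : (Fin n → α) → ℝ} {c : Fin n → ℝ}, Measurable f → HasBoundedDifferences f c →
      ∀ t : ℝ, ∫ ω, exp (t * f ω) ∂Measure.pi ν ≤
        exp (t * ∫ ω, f ω ∂Measure.pi ν + (∑ i, c i ^ 2) * t ^ 2 / 8)
  | 0, ν, _, f, c, _, _, t => by
    have hconst (ω : Fin 0 → α) : f ω = f Fin.elim0 := congrArg f (Subsingleton.elim _ _)
    simp [hconst]
  | n + 1, ν, _, f, c, hmeas, hf, t => by
    set μ := Measure.pi fun i : Fin n => ν i.succ
    set g : (Fin n → α) → ℝ := fun y => ∫ x, f (Fin.cons x y) ∂ν 0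
    have hF : Measurable fun z : α × (Fin n → α) => f (Fin.cons z.1 z.2) :=
      hmeas.comp measurable_fin_cons
    have hg : HasBoundedDifferences g fun i => c i.succ := hf.integral_cons (ν 0) hmeas
    have hgm : Measurable g := hF.stronglyMeasurable.integral_prod_left'.measurable
    obtain ⟨a, b, hab⟩ := hf.exists_mem_Icc
    obtain ⟨a', b', hab'⟩ := hg.exists_mem_Icc
    have hg_integral : ∫ y, g y ∂μ = ∫ ω, f ω ∂Measure.pi ν := by
      rw [integral_pi_fin_succ,
        integral_prod_symm _ (.of_mem_Icc a b hF.aemeasurable (ae_of_all _ fun z => hab _))]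
    calc ∫ ω, exp (t * f ω) ∂Measure.pi ν = ∫ y, ∫ x, exp (t * f (Fin.cons x y)) ∂ν 0 ∂μ := by
          rw [integral_pi_fin_succ, integral_prod_symm _
            (integrable_exp_mul_of_mem_Icc hF.aemeasurable (ae_of_all _ fun z => hab _))]
      _ ≤ ∫ y, exp (t * g y) * exp (c 0 ^ 2 * t ^ 2 / 8) ∂μ :=
          integral_mono_of_nonneg (ae_of_all _ fun y => integral_nonneg fun x => (exp_pos _).le)
            ((integrable_exp_mul_of_mem_Icc hgm.aemeasurable (ae_of_all _ hab')).mul_const _)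
            (ae_of_all _ (integral_exp_mul_cons_le (ν 0) hmeas hf t))
      _ = (∫ y, exp (t * g y) ∂μ) * exp (c 0 ^ 2 * t ^ 2 / 8) := integral_mul_const _ _
      _ ≤ exp (t * ∫ y, g y ∂μ + (∑ i : Fin n, c i.succ ^ 2) * t ^ 2 / 8) *
            exp (c 0 ^ 2 * t ^ 2 / 8) := by
          gcongr
          exact integral_exp_mul_le_of_hasBoundedDifferences _ hgm hg t
      _ = exp (t * ∫ ω, f ω ∂Measure.pi ν + (∑ i, c i ^ 2) * t ^ 2 / 8) := by
          rw [hg_integral, Fin.sum_univ_succ, ← exp_add]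
          ring_nf

section McDiarmid

variable {α : Type*} [MeasurableSpace α] {n : ℕ} {ν : Fin n → Measure α}
  [∀ i, IsProbabilityMeasure (ν i)] {f : (Fin n → α) → ℝ} {c : Fin n → ℝ}

theorem hasSubgaussianMGF_of_hasBoundedDifferences (hmeas : Measurable f)
    (hf : HasBoundedDifferences f c) :
    HasSubgaussianMGF (fun ω => f ω - ∫ ω, f ω ∂Measure.pi ν) ((∑ i, ‖c i‖₊ ^ 2) / 4)
      (Measure.pi ν) where
  integrable_exp_mul t := by
    obtain ⟨a, b, hab⟩ := hf.exists_mem_Icc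
    refine integrable_exp_mul_of_mem_Icc (hmeas.sub_const _).aemeasurable
      (ae_of_all _ fun ω => ⟨?_, ?_⟩) (a := a - ∫ ω, f ω ∂Measure.pi ν)
      (b := b - ∫ ω, f ω ∂Measure.pi ν)
    · linarith [(hab ω).1]
    · linarith [(hab ω).2]
  mgf_le t := by
    simp_rw [sub_eq_add_neg, mgf_add_const]
    refine (mul_le_mul_of_nonneg_right (integral_exp_mul_le_of_hasBoundedDifferences ν hmeas hf t)
      (exp_pos _).le).trans_eq ?_
    rw [← exp_add]
    push_cast
    simp_rw [Real.norm_eq_abs, sq_abs]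
    ring_nf

theorem measureReal_abs_sub_integral_ge_le_of_hasBoundedDifferences (hmeas : Measurable f)
    (hf : HasBoundedDifferences f c) {ε : ℝ} (hε : 0 ≤ ε) :
    (Measure.pi ν).real {ω | ε ≤ |f ω - ∫ ω, f ω ∂Measure.pi ν|} ≤
      2 * exp (-2 * ε ^ 2 / ∑ i, c i ^ 2) := by
  have h := hasSubgaussianMGF_of_hasBoundedDifferences (ν := ν) hmeas hf
  have hset : {ω | ε ≤ |f ω - ∫ ω, f ω ∂Measure.pi ν|} =
      {ω | ε ≤ f ω - ∫ ω, f ω ∂Measure.pi ν} ∪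
        {ω | ε ≤ (-fun ω => f ω - ∫ ω, f ω ∂Measure.pi ν) ω} := by
    ext ω
    simp [le_abs]
  have hexp : -ε ^ 2 / (2 * (((∑ i, ‖c i‖₊ ^ 2) / 4 : NNReal) : ℝ)) =
      -2 * ε ^ 2 / ∑ i, c i ^ 2 := by
    push_cast
    simp_rw [Real.norm_eq_abs, sq_abs]
    ring
  calc _ ≤ _ := hset ▸ measureReal_union_le _ _
    _ ≤ _ := add_le_add (h.measure_ge_le hε) (h.neg.measure_ge_le hε)
    _ = _ := by rw [hexp]; ring

end McDiarmid

lemma Fintype.sum_sum_eq_add_sum_compl {ι M : Type*} [Fintype ι] [DecidableEq ι] [AddCommMonoid M]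
    (g : ι → ι → M) (k : ι) :
    ∑ i, ∑ j, g i j =
      g k k + ∑ j ∈ {k}ᶜ, (g k j + g j k) + ∑ i ∈ {k}ᶜ, ∑ j ∈ {k}ᶜ, g i j := by
  simp_rw [Fintype.sum_eq_add_sum_compl k, Finset.sum_add_distrib]
  abel

lemma measurePreserving_eval_prodMk_eval {ι : Type*} [Fintype ι] {β : ι → Type*}
    [∀ i, MeasurableSpace (β i)] (μ : ∀ i, Measure (β i)) [∀ i, IsProbabilityMeasure (μ i)]
    {i j : ι} (hij : i ≠ j) :
    MeasurePreserving (fun ω => (ω i, ω j)) (Measure.pi μ) ((μ i).prod (μ j)) := by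
  have hind : IndepFun (fun ω => ω i) (fun ω => ω j) (Measure.pi μ) :=
    (iIndepFun_pi (μ := μ) (X := fun _ => id) fun _ => aemeasurable_id).indepFun hij
  refine ⟨by fun_prop, ?_⟩
  rw [(indepFun_iff_map_prod_eq_prod_map_map (measurable_pi_apply i).aemeasurable
    (measurable_pi_apply j).aemeasurable).1 hind]
  exact congrArg₂ _ (measurePreserving_eval μ i).map_eq (measurePreserving_eval μ j).map_eq

section PairSum

variable {ι β : Type*} [Fintype ι]

def pairSum (χ : β × β → ℝ) (ω : ι → β) : ℝ := ∑ i, ∑ j, χ (ω i, ω j)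

lemma hasBoundedDifferences_pairSum [DecidableEq ι] {χ : β × β → ℝ} (hdiag : ∀ u, χ (u, u) = 0)
    (hnonneg : ∀ u v, 0 ≤ χ (u, v) + χ (v, u)) (hle_one : ∀ u v, χ (u, v) + χ (v, u) ≤ 1) :
    HasBoundedDifferences (pairSum χ) fun _ : ι => (Fintype.card ι : ℝ) - 1 := by
  intro k ω x x'
  have hsplit (z : β) : pairSum χ (Function.update ω k z) =
      ∑ j ∈ {k}ᶜ, (χ (z, ω j) + χ (ω j, z)) + ∑ i ∈ {k}ᶜ, ∑ j ∈ {k}ᶜ, χ (ω i, ω j) := by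
    have hupd : ∀ j ∈ ({k}ᶜ : Finset ι), Function.update ω k z j = ω j := fun j hj =>
      Function.update_of_ne (by simpa using hj) _ _
    rw [pairSum, Fintype.sum_sum_eq_add_sum_compl _ k, Function.update_self, hdiag, zero_add]
    congr 1
    · exact Finset.sum_congr rfl fun j hj => by rw [hupd j hj]
    · exact Finset.sum_congr rfl fun i hi => Finset.sum_congr rfl fun j hj => by
        rw [hupd i hi, hupd j hj]
  have hcard : ∑ _j ∈ ({k}ᶜ : Finset ι), (1 : ℝ) = Fintype.card ι - 1 := by
    simp [Finset.card_compl, Nat.cast_sub (Fintype.card_pos_iff.2 ⟨k⟩)]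
  rw [hsplit, hsplit, ← hcard]
  linarith [Finset.sum_le_sum fun j (_ : j ∈ ({k}ᶜ : Finset ι)) => hle_one x (ω j),
    Finset.sum_nonneg fun j (_ : j ∈ ({k}ᶜ : Finset ι)) => hnonneg x' (ω j)]

lemma measurable_pairSum [MeasurableSpace β] {χ : β × β → ℝ} (hχ : Measurable χ) :
    Measurable (pairSum χ : (ι → β) → ℝ) := by
  unfold pairSum
  fun_prop

lemma integral_pairSum [MeasurableSpace β] {ν : Measure β}
    [IsProbabilityMeasure ν] {χ : β × β → ℝ} (hdiag : ∀ u, χ (u, u) = 0)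
    (hχ : Integrable χ (ν.prod ν)) :
    ∫ ω, pairSum χ ω ∂Measure.pi (fun _ : ι => ν) =
      Fintype.card ι * (Fintype.card ι - 1) * ∫ q, χ q ∂ν.prod ν := by
  classical
  have hterm (i j : ι) : Integrable (fun ω : ι → β => χ (ω i, ω j)) (Measure.pi fun _ => ν) ∧
      ∫ ω, χ (ω i, ω j) ∂Measure.pi (fun _ => ν) = if i = j then 0 else ∫ q, χ q ∂ν.prod ν := by
    by_cases hij : i = j
    · subst hij
      simp [hdiag]
    · have h := measurePreserving_eval_prodMk_eval (fun _ : ι => ν) hij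
      refine ⟨h.integrable_comp_of_integrable hχ, ?_⟩
      rw [if_neg hij, ← h.map_eq, integral_map h.measurable.aemeasurable]
      exact h.map_eq ▸ hχ.aestronglyMeasurable
  simp only [pairSum]
  rw [integral_finsetSum _ fun i _ => integrable_finsetSum _ fun j _ => (hterm i j).1]
  simp_rw [integral_finsetSum _ fun j _ => (hterm _ j).1, fun i j => (hterm i j).2]
  simp only [Finset.sum_ite, Finset.filter_ne, Finset.sum_const_zero, zero_add, Finset.sum_const,
    nsmul_eq_mul, Finset.mem_univ, Finset.card_erase_of_mem, Finset.card_univ]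
  rcases Nat.eq_zero_or_pos (Fintype.card ι) with h | h
  · simp [h]
  · rw [Nat.cast_sub h]
    ring

end PairSum

local notation "𝒰" => volume.restrict (Set.Icc (0 : ℝ) 1)

instance : IsProbabilityMeasure 𝒰 := ⟨by simp⟩

def intervalPrecedes : Set ((ℝ × ℝ) × (ℝ × ℝ)) := {q | max q.1.1 q.1.2 < min q.2.1 q.2.2}

lemma measurableSet_intervalPrecedes : MeasurableSet intervalPrecedes :=
  measurableSet_lt (by fun_prop) (by fun_prop)

lemma intervalPrecedes_irrefl (u : ℝ × ℝ) : (u, u) ∉ intervalPrecedes :=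
  fun h : max u.1 u.2 < min u.1 u.2 => (h.trans_le min_le_max).false

lemma intervalPrecedes_asymm {u v : ℝ × ℝ} (h : (u, v) ∈ intervalPrecedes) :
    (v, u) ∉ intervalPrecedes := fun h' : max v.1 v.2 < min u.1 u.2 =>
  ((h : max u.1 u.2 < min v.1 v.2).trans_le (min_le_max.trans (h'.trans_le min_le_max).le)).false

lemma indicator_intervalPrecedes_self (u : ℝ × ℝ) :
    intervalPrecedes.indicator (1 : (ℝ × ℝ) × (ℝ × ℝ) → ℝ) (u, u) = 0 :=
  Set.indicator_of_notMem (intervalPrecedes_irrefl u) _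

lemma indicator_intervalPrecedes_add_swap_le_one (u v : ℝ × ℝ) :
    intervalPrecedes.indicator (1 : (ℝ × ℝ) × (ℝ × ℝ) → ℝ) (u, v) +
      intervalPrecedes.indicator 1 (v, u) ≤ 1 := by
  by_cases huv : (u, v) ∈ intervalPrecedes
  · simp [huv, intervalPrecedes_asymm huv]
  · by_cases hvu : (v, u) ∈ intervalPrecedes <;> simp [huv, hvu]

lemma intervalIntegral_one_sub_max_sq {x : ℝ} (hx : x ∈ Set.Icc (0 : ℝ) 1) :
    ∫ y in (0 : ℝ)..1, (1 - max x y) ^ 2 = x * (1 - x) ^ 2 + (1 - x) ^ 3 / 3 := by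
  have hint (a b : ℝ) : IntervalIntegrable (fun y => (1 - max x y) ^ 2) volume a b := by
    apply Continuous.intervalIntegrable; fun_prop
  rw [← intervalIntegral.integral_add_adjacent_intervals (hint 0 x) (hint x 1)]
  have hleft : ∫ y in (0 : ℝ)..x, (1 - max x y) ^ 2 = ∫ _ in (0 : ℝ)..x, (1 - x) ^ 2 :=
    intervalIntegral.integral_congr fun y hy => by
      rw [Set.uIcc_of_le hx.1] at hy
      simp [max_eq_left hy.2]
  have hright : ∫ y in x..1, (1 - max x y) ^ 2 = ∫ y in x..1, (1 - y) ^ 2 :=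
    intervalIntegral.integral_congr fun y hy => by
      rw [Set.uIcc_of_le hx.2] at hy
      simp [max_eq_right hy.1]
  rw [hleft, hright]
  norm_num [intervalIntegral.integral_comp_sub_left (fun y : ℝ => y ^ 2), integral_pow]

lemma ae_mem_unitSquare :
    ∀ᵐ u ∂((𝒰).prod 𝒰), u ∈ Set.Icc (0 : ℝ) 1 ×ˢ Set.Icc (0 : ℝ) 1 := by
  rw [Measure.prod_restrict]
  exact ae_restrict_mem (measurableSet_Icc.prod measurableSet_Icc)

lemma integrable_one_sub_max_sq :
    Integrable (fun u : ℝ × ℝ => (1 - max u.1 u.2) ^ 2) ((𝒰).prod 𝒰) := by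
  refine .of_mem_Icc 0 1 (by fun_prop) (ae_mem_unitSquare.mono fun u hu => ⟨by positivity, ?_⟩)
  obtain ⟨⟨h1, h2⟩, h3, h4⟩ := hu
  have : 0 ≤ 1 - max u.1 u.2 := by simp [h2, h4]
  nlinarith [le_max_left u.1 u.2]

lemma integral_one_sub_max_sq :
    ∫ u, (1 - max u.1 u.2) ^ 2 ∂((𝒰).prod 𝒰) = 1 / 6 := by
  rw [integral_prod _ integrable_one_sub_max_sq, integral_Icc_eq_integral_Ioc,
    ← intervalIntegral.integral_of_le zero_le_one]
  have hinner : Set.EqOn (fun x => ∫ y in Set.Icc (0 : ℝ) 1, (1 - max (x, y).1 (x, y).2) ^ 2)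
      (fun x => x * (1 - x) ^ 2 + (1 - x) ^ 3 / 3) (Set.uIcc 0 1) := fun x hx => by
    rw [Set.uIcc_of_le zero_le_one] at hx
    simp only
    rw [integral_Icc_eq_integral_Ioc, ← intervalIntegral.integral_of_le zero_le_one,
      intervalIntegral_one_sub_max_sq hx]
  rw [intervalIntegral.integral_congr hinner]
  have hpoly (x : ℝ) : x * (1 - x) ^ 2 + (1 - x) ^ 3 / 3 = 1 / 3 - x ^ 2 + 2 / 3 * x ^ 3 := by ring
  simp_rw [hpoly]
  norm_num [integral_pow]

lemma uniform_Ioi {t : ℝ} (ht : 0 ≤ t) : 𝒰 (Set.Ioi t) = ENNReal.ofReal (1 - t) := by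
  have hset : Set.Ioi t ∩ Set.Icc 0 1 = Set.Ioc t 1 :=
    Set.ext fun x => ⟨fun h => ⟨h.1, h.2.2⟩, fun h => ⟨h.1, ht.trans h.1.le, h.2⟩⟩
  rw [Measure.restrict_apply measurableSet_Ioi, hset, Real.volume_Ioc]

lemma uniform_prod_lt_min {t : ℝ} (ht : t ∈ Set.Icc (0 : ℝ) 1) :
    ((𝒰).prod 𝒰) {v | t < min v.1 v.2} = ENNReal.ofReal ((1 - t) ^ 2) := by
  have hset : {v : ℝ × ℝ | t < min v.1 v.2} = Set.Ioi t ×ˢ Set.Ioi t := by ext; simp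
  rw [hset, Measure.prod_prod, uniform_Ioi ht.1, ← ENNReal.ofReal_mul (by linarith [ht.2]), sq]

lemma measureReal_intervalPrecedes :
    (((𝒰).prod 𝒰).prod ((𝒰).prod 𝒰)).real intervalPrecedes = 1 / 6 := by
  have hslice : ∀ᵐ u ∂(𝒰).prod 𝒰, ((𝒰).prod 𝒰) (Prod.mk u ⁻¹' intervalPrecedes) =
      ENNReal.ofReal ((1 - max u.1 u.2) ^ 2) := by
    filter_upwards [ae_mem_unitSquare] with u ⟨⟨h1, h2⟩, h3, h4⟩
    exact uniform_prod_lt_min ⟨le_max_of_le_left h1, max_le h2 h4⟩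
  rw [measureReal_def, Measure.prod_apply measurableSet_intervalPrecedes, lintegral_congr_ae hslice,
    ← ofReal_integral_eq_lintegral_ofReal integrable_one_sub_max_sq
      (ae_of_all _ fun u => sq_nonneg _), integral_one_sub_max_sq]
  norm_num

lemma intervalComp_eq_pairSum (n : ℕ) (ω : Fin n → ℝ × ℝ) :
    (intervalComp n ω : ℝ) = pairSum (intervalPrecedes.indicator 1) ω := by
  classical
  rw [intervalComp, Nat.card_eq_fintype_card, Fintype.card_subtype, Finset.natCast_card_filter,
    pairSum, ← Finset.univ_product_univ, Finset.sum_product]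
  simp [Set.indicator_apply, intervalLT, intervalPrecedes]

instance (n : ℕ) : IsProbabilityMeasure (intervalMeasure n) := by
  unfold intervalMeasure
  infer_instance

lemma measurable_intervalComp (n : ℕ) : Measurable fun ω => (intervalComp n ω : ℝ) := by
  simp_rw [intervalComp_eq_pairSum]
  exact measurable_pairSum (measurable_const.indicator measurableSet_intervalPrecedes)

lemma hasBoundedDifferences_intervalComp (n : ℕ) :
    HasBoundedDifferences (fun ω => (intervalComp n ω : ℝ)) fun _ => (n : ℝ) - 1 := by
  simp_rw [intervalComp_eq_pairSum]
  simpa using hasBoundedDifferences_pairSum (ι := Fin n) indicator_intervalPrecedes_self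
    (fun u v => add_nonneg (Set.indicator_nonneg (fun _ _ => zero_le_one) _)
      (Set.indicator_nonneg (fun _ _ => zero_le_one) _))
    indicator_intervalPrecedes_add_swap_le_one

lemma integral_intervalComp (n : ℕ) :
    ∫ ω, (intervalComp n ω : ℝ) ∂intervalMeasure n = 1 / 3 * (n * (n - 1) / 2) := by
  simp_rw [intervalComp_eq_pairSum]
  rw [intervalMeasure, integral_pairSum (χ := intervalPrecedes.indicator 1)
    indicator_intervalPrecedes_self ((integrable_const 1).indicator measurableSet_intervalPrecedes),
    integral_indicator_one measurableSet_intervalPrecedes, measureReal_intervalPrecedes]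
  simp
  ring

theorem randomIntervalOrder_comp_concentration (n : ℕ) (a : ℝ) (ha0 : 0 < a) (ha1 : a < 1) :
    intervalMeasure n
        {ω | a * ((n : ℝ) * ((n : ℝ) - 1) / 2) ≤
          |(intervalComp n ω : ℝ) - (1 / 3) * ((n : ℝ) * ((n : ℝ) - 1) / 2)|} ≤
      ENNReal.ofReal (2 * Real.exp (-(a ^ 2) * n / 2)) := by
  rcases le_or_gt n 1 with hn | hn
  · refine prob_le_one.trans (ENNReal.one_le_ofReal.2 ?_)
    have hexp : -(1 / 2 : ℝ) ≤ -(a ^ 2) * n / 2 := by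
      have : (n : ℝ) ≤ 1 := by exact_mod_cast hn
      nlinarith [sq_nonneg a, mul_pos ha0 ha0]
    linarith [add_one_le_exp (-(1 / 2 : ℝ)), exp_le_exp.2 hexp]
  have hn' : (1 : ℝ) ≤ n - 1 := by
    have : (2 : ℝ) ≤ n := by exact_mod_cast hn
    linarith
  have htail := measureReal_abs_sub_integral_ge_le_of_hasBoundedDifferences
    (ν := fun _ => (𝒰).prod 𝒰) (measurable_intervalComp n) (hasBoundedDifferences_intervalComp n)
    (ε := a * ((n : ℝ) * ((n : ℝ) - 1) / 2)) (by positivity)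
  have hexp : -2 * (a * ((n : ℝ) * ((n : ℝ) - 1) / 2)) ^ 2 / ∑ _i : Fin n, ((n : ℝ) - 1) ^ 2 =
      -(a ^ 2) * n / 2 := by
    have : (n : ℝ) - 1 ≠ 0 := by positivity
    simp only [Finset.sum_const, Finset.card_univ, Fintype.card_fin, nsmul_eq_mul]
    field_simp
  rw [← intervalMeasure, integral_intervalComp, hexp] at htail
  rw [← ofReal_measureReal]
  exact ENNReal.ofReal_le_ofReal htail
end

section
/- For every 0 ≤ δ < 1 and every positive integer n, there exists a partially ordered set Q on n points with comp(Q) ≥ δ·n(n−1)/2 and e(Q) ≥ n!·((1−δ)/(2−δ))^n. -/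
open Equiv Finset MulAction

abbrev weakOrder {α β : Type*} [LinearOrder β] (f : α → β) : PartialOrder α :=
  have : IsStrictOrder α (InvImage (· < ·) f) := {}
  partialOrderOfSO (InvImage (· < ·) f)

theorem card_perm_le_pow_mul_card_comp_eq {α β : Type*} [Finite α] [Finite β] (f : α → β) :
    Nat.card (Perm α) ≤ Nat.card β ^ Nat.card α * Nat.card {σ : Perm α // f ∘ σ = f} := by
  have hstab : Nat.card (stabilizer (Perm α)ᵈᵐᵃ f) = Nat.card {σ : Perm α // f ∘ σ = f} :=
    Nat.card_congr (subtypeEquiv DomMulAct.mk.symm fun _ ↦ DomMulAct.mem_stabilizer_iff)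
  calc Nat.card (Perm α) = Nat.card (Perm α)ᵈᵐᵃ := Nat.card_congr DomMulAct.mk
    _ = Nat.card (stabilizer (Perm α)ᵈᵐᵃ f) * (orbit (Perm α)ᵈᵐᵃ f).ncard := by
      rw [← index_stabilizer, Subgroup.card_mul_index]
    _ ≤ Nat.card {σ : Perm α // f ∘ σ = f} * Nat.card (α → β) := by
      rw [hstab]
      exact Nat.mul_le_mul_left _ (Set.ncard_le_card _)
    _ = _ := by rw [Nat.card_fun, mul_comm]

theorem card_comp_eq_le_linExtCount {n : ℕ} {β : Type*} [LinearOrder β] {f : Fin n → β}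
    (hf : Monotone f) (P : PartialOrder (Fin n)) (hP : ∀ x y, P.lt x y → f x < f y) :
    Nat.card {σ : Perm (Fin n) // f ∘ σ = f} ≤ linExtCount n P := by
  refine Nat.card_le_card_of_injective (Subtype.map id fun σ hσ x y hxy ↦ hf.reflect_lt ?_)
    (Subtype.map_injective _ Function.injective_id)
  have hfσ : ∀ z, f (σ z) = f z := congr_fun hσ
  simpa only [id, hfσ] using hP x y hxy

theorem factorial_le_pow_mul_linExtCount {n m : ℕ} {f : Fin n → Fin m} (hf : Monotone f)
    (P : PartialOrder (Fin n)) (hP : ∀ x y, P.lt x y → f x < f y) :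
    n.factorial ≤ m ^ n * linExtCount n P := by
  simpa [Fintype.card_perm] using (card_perm_le_pow_mul_card_comp_eq f).trans
    (Nat.mul_le_mul_left _ (card_comp_eq_le_linExtCount hf P hP))

theorem card_mul_card_le_two_mul_card_lt_add {α β : Type*} [Fintype α] [LinearOrder β]
    (f : α → β) {a : ℕ} (hf : ∀ b, #{x | f x = b} ≤ a) :
    Fintype.card α * Fintype.card α ≤ 2 * #{p : α × α | f p.1 < f p.2} + a * Fintype.card α := by
  have hswap : #{p : α × α | f p.2 < f p.1} = #{p : α × α | f p.1 < f p.2} :=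
    card_equiv (prodComm α α) (by simp)
  have hdiag : #{p : α × α | f p.1 = f p.2} ≤ a * Fintype.card α := by
    rw [card_filter, Fintype.sum_prod_type]
    calc ∑ x, ∑ y, (if f x = f y then 1 else 0) = ∑ x, #{y | f y = f x} := by
          simp only [← card_filter, eq_comm]
      _ ≤ ∑ _x : α, a := sum_le_sum fun x _ ↦ hf (f x)
      _ = a * Fintype.card α := by simp [mul_comm]
  have htri : Fintype.card α * Fintype.card α = #{p : α × α | f p.1 < f p.2}
      + #{p : α × α | f p.2 < f p.1} + #{p : α × α | f p.1 = f p.2} := by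
    rw [← Fintype.card_prod, ← card_univ, card_eq_sum_ones, card_filter, card_filter, card_filter,
      ← sum_add_distrib, ← sum_add_distrib]
    refine sum_congr rfl fun p _ ↦ ?_
    rcases lt_trichotomy (f p.1) (f p.2) with h | h | h
    · simp [h, h.not_gt, h.ne]
    · simp [h]
    · simp [h, h.not_gt, h.ne']
  omega

theorem mul_self_le_two_mul_compCount_weakOrder_add {n : ℕ} {β : Type*} [LinearOrder β]
    {f : Fin n → β} {a : ℕ} (hf : ∀ b, #{x | f x = b} ≤ a) :
    n * n ≤ 2 * compCount n (weakOrder f) + a * n := by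
  change n * n ≤ 2 * Nat.card {p : Fin n × Fin n // f p.1 < f p.2} + a * n
  rw [Nat.card_eq_fintype_card, Fintype.card_subtype]
  simpa using card_mul_card_le_two_mul_card_lt_add f hf

theorem card_filter_fin_div_eq_le {n a : ℕ} (ha : 0 < a) (j : ℕ) :
    #{i : Fin n | i / a = j} ≤ a := by
  calc #{i : Fin n | i / a = j} ≤ #(Ico (j * a) (j * a + a)) := by
        refine card_le_card_of_injOn Fin.val (fun i hi ↦ ?_) Fin.val_injective.injOn
        have := (Nat.div_eq_iff ha).1 (mem_filter.1 hi).2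
        simp only [coe_Ico, Set.mem_Ico]
        omega
    _ = a := by simp

theorem exists_monotone_fin_card_fiber_le {n m a : ℕ} (h : n ≤ m * a) :
    ∃ f : Fin n → Fin m, Monotone f ∧ ∀ j, #{i | f i = j} ≤ a := by
  rcases Nat.eq_zero_or_pos a with rfl | ha
  · obtain rfl : n = 0 := by simpa using h
    exact ⟨finZeroElim, fun i ↦ i.elim0, fun j ↦ by simp⟩
  refine ⟨fun i ↦ ⟨i / a, Nat.div_lt_of_lt_mul (i.2.trans_le (h.trans_eq (mul_comm _ _)))⟩,
    fun i j hij ↦ Nat.div_le_div_right hij, fun j ↦ ?_⟩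
  simpa only [Fin.ext_iff] using card_filter_fin_div_eq_le ha j

theorem exists_nat_one_lt_mul_le_one_add {ε : ℝ} (hε : 0 < ε) :
    ∃ m : ℕ, 0 < m ∧ 1 < m * ε ∧ m * ε ≤ 1 + ε := by
  refine ⟨⌊ε⁻¹⌋₊ + 1, Nat.succ_pos _, ?_, ?_⟩
  · have := Nat.lt_floor_add_one ε⁻¹
    push_cast
    rwa [← div_lt_iff₀ hε, one_div]
  · have := Nat.floor_le (inv_nonneg.2 hε.le)
    push_cast
    rw [add_mul, one_mul, add_le_add_iff_right, ← le_div_iff₀ hε, one_div]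
    exact this

theorem exists_le_mul_lt_add (n : ℕ) {m : ℕ} (hm : 0 < m) : ∃ a, n ≤ m * a ∧ m * a < n + m :=
  ⟨(n + m - 1) / m, by
    have := Nat.div_add_mod (n + m - 1) m
    have := Nat.mod_lt (n + m - 1) hm
    constructor <;> omega⟩

theorem exists_dense_with_many_extensions_general (δ : ℝ) (hδ1 : δ < 1)
    (n : ℕ) :
    ∃ P : PartialOrder (Fin n),
      δ * ((n : ℝ) * ((n : ℝ) - 1) / 2) ≤ (compCount n P : ℝ) ∧
      (Nat.factorial n : ℝ) * ((1 - δ) / (2 - δ)) ^ n ≤ (linExtCount n P : ℝ) := by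
  obtain ⟨m, hm, hm_lo, hm_hi⟩ := exists_nat_one_lt_mul_le_one_add (sub_pos.2 hδ1)
  obtain ⟨a, hna, han⟩ := exists_le_mul_lt_add n hm
  obtain ⟨f, hf, hfib⟩ := exists_monotone_fin_card_fiber_le hna
  refine ⟨weakOrder f, ?_, ?_⟩
  · have hcomp : (n : ℝ) * n ≤ 2 * compCount n (weakOrder f) + a * n := by
      exact_mod_cast mul_self_le_two_mul_compCount_weakOrder_add hfib
    have hma : (m : ℝ) * a + 1 ≤ n + m := by exact_mod_cast han
    have hnn : (n : ℝ) ≤ n * n := by exact_mod_cast Nat.le_mul_self n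
    -- After multiplying by `m`: `n(n-1)(m(1-δ) - 1) ≥ 0` and `n(n + m - 1 - ma) ≥ 0`.
    have hkey : δ * (n * (n - 1)) ≤ n * (n - a) := by
      refine le_of_mul_le_mul_left ?_ (Nat.cast_pos.2 hm)
      nlinarith [mul_nonneg (sub_nonneg.2 hnn) (sub_nonneg.2 hm_lo.le),
        mul_le_mul_of_nonneg_left hma (Nat.cast_nonneg n)]
    linarith
  · have hext : (n.factorial : ℝ) ≤ m ^ n * linExtCount n (weakOrder f) := by
      exact_mod_cast factorial_le_pow_mul_linExtCount hf (weakOrder f) fun _ _ h ↦ h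
    have hc : 0 ≤ (1 - δ) / (2 - δ) := div_nonneg (by linarith) (by linarith)
    have hmc : m * ((1 - δ) / (2 - δ)) ≤ 1 := by
      rw [← mul_div_assoc, div_le_one (by linarith)]
      linarith
    calc (n.factorial : ℝ) * ((1 - δ) / (2 - δ)) ^ n
        ≤ m ^ n * linExtCount n (weakOrder f) * ((1 - δ) / (2 - δ)) ^ n := by gcongr
      _ = (m * ((1 - δ) / (2 - δ))) ^ n * linExtCount n (weakOrder f) := by rw [mul_pow]; ring
      _ ≤ linExtCount n (weakOrder f) :=
        mul_le_of_le_one_left (Nat.cast_nonneg _) (pow_le_one₀ (by positivity) hmc)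

theorem exists_dense_with_many_extensions (δ : ℝ) (hδ0 : 0 ≤ δ) (hδ1 : δ < 1)
    (n : ℕ) (hn : 1 ≤ n) :
    ∃ P : PartialOrder (Fin n),
      δ * ((n : ℝ) * ((n : ℝ) - 1) / 2) ≤ (compCount n P : ℝ) ∧
      (Nat.factorial n : ℝ) * ((1 - δ) / (2 - δ)) ^ n ≤ (linExtCount n P : ℝ) :=
  exists_dense_with_many_extensions_general δ hδ1 n
end

section
/- Let n be a positive integer and let δ satisfy 1/n ≤ δ ≤ 1/2. Then there exists a partially ordered set Q on n points with comp(Q) ≥ δ·n(n−1)/2 and e(Q) ≥ n!·(2δ/e)^{2δn}. -/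
/-! Take the two-level order in which the `n - k` smallest points lie below the `k = ⌈δn⌉`
largest ones. It has `(n - k) k ≥ δ n (n - 1) / 2` comparable pairs, and its linear extensions
include all independent permutations of the two levels, so `e ≥ (n - k)! k! = n! / C(n, k)`.
Finally `C(n, k) ≤ (e n / k)^k ≤ (e n / b)^b` for `k ≤ b = 2δn ≤ n`, because `x ↦ x log (e n / x)`
is increasing on `(0, n]`. -/

open Nat

abbrev twoLevel {α : Type*} (p : α → Prop) : PartialOrder α where
  le x y := x = y ∨ (p x ∧ ¬ p y)
  lt x y := p x ∧ ¬ p y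
  le_refl _ := Or.inl rfl
  le_trans := by rintro a b c (rfl | ⟨ha, hb⟩) (rfl | ⟨hb', hc⟩) <;> tauto
  le_antisymm := by rintro a b (rfl | ⟨ha, hb⟩) (h | ⟨hb', ha'⟩) <;> tauto
  lt_iff_le_not_ge x y := by
    constructor
    · rintro ⟨hx, hy⟩; refine ⟨Or.inr ⟨hx, hy⟩, ?_⟩; rintro (rfl | ⟨hy', -⟩) <;> tauto
    · rintro ⟨rfl | h, hn⟩ <;> tauto

theorem compCount_twoLevel (n : ℕ) (p : Fin n → Prop) :
    compCount n (twoLevel p) = Nat.card {x // p x} * Nat.card {x // ¬ p x} := by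
  rw [compCount, ← Nat.card_prod]
  exact Nat.card_congr (Equiv.subtypeProdEquivProd (p := p) (q := fun x => ¬ p x))

theorem Fin.natCard_val_lt {n m : ℕ} (hm : m ≤ n) : Nat.card {x : Fin n // (x : ℕ) < m} = m := by
  rw [Nat.card_eq_fintype_card, Fintype.card_subtype, Fin.card_filter_val_lt, min_eq_right hm]

theorem Fin.natCard_not_val_lt {n m : ℕ} (hm : m ≤ n) :
    Nat.card {x : Fin n // ¬ (x : ℕ) < m} = n - m := by
  rw [Nat.card_eq_fintype_card, Fintype.card_subtype_compl, Fintype.card_fin,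
    ← Nat.card_eq_fintype_card, Fin.natCard_val_lt hm]

theorem factorial_mul_factorial_le_linExtCount {n m : ℕ} (hm : m ≤ n) :
    m ! * (n - m)! ≤ linExtCount n (twoLevel fun x : Fin n => (x : ℕ) < m) := by
  let p : Fin n → Prop := fun x => (x : ℕ) < m
  let f : Equiv.Perm {x // p x} × Equiv.Perm {x // ¬ p x} →
      {f : Fin n ≃ Fin n // ∀ x y, (twoLevel p).lt x y → f x < f y} :=
    fun στ => ⟨Equiv.Perm.subtypeCongrHom p στ, fun x y ⟨hx, hy⟩ => by
      simp only [Equiv.Perm.subtypeCongrHom_apply, Equiv.Perm.subtypeCongr.left_apply _ _ hx,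
        Equiv.Perm.subtypeCongr.right_apply _ _ hy]
      exact Fin.lt_def.2 <| lt_of_lt_of_le (στ.1 ⟨x, hx⟩).2 (not_lt.1 (στ.2 ⟨y, hy⟩).2)⟩
  have := Nat.card_le_card_of_injective f fun a b h =>
    Equiv.Perm.subtypeCongrHom_injective p (congrArg Subtype.val h)
  rwa [Nat.card_prod, Nat.card_perm, Nat.card_perm, Fin.natCard_val_lt hm,
    Fin.natCard_not_val_lt hm] at this

theorem pow_le_exp_one_pow_mul_factorial (k : ℕ) : (k : ℝ) ^ k ≤ Real.exp 1 ^ k * k ! := by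
  rw [Real.exp_one_pow, ← div_le_iff₀ (by positivity)]
  exact Real.pow_div_factorial_le_exp _ k.cast_nonneg k

theorem choose_le_exp_one_mul_div_pow (n k : ℕ) :
    (n.choose k : ℝ) ≤ (Real.exp 1 * n / k) ^ k := by
  rcases k.eq_zero_or_pos with rfl | hk
  · simp
  calc (n.choose k : ℝ) ≤ n ^ k / k ! := Nat.choose_le_pow_div k n
    _ ≤ n ^ k * Real.exp 1 ^ k / k ^ k := by
      rw [div_le_div_iff₀ (by positivity) (by positivity), mul_assoc]
      exact mul_le_mul_of_nonneg_left (pow_le_exp_one_pow_mul_factorial k) (by positivity)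
    _ = (Real.exp 1 * n / k) ^ k := by rw [div_pow, mul_pow, mul_comm]

theorem div_rpow_self_le_div_rpow_self {a b c : ℝ} (ha : 0 < a) (hab : a ≤ b)
    (hbc : Real.exp 1 * b ≤ c) : (c / a) ^ a ≤ (c / b) ^ b := by
  have hb : 0 < b := ha.trans_le hab
  have hc : 0 < c := lt_of_lt_of_le (by positivity) hbc
  have hlog : 1 ≤ Real.log (c / b) := by
    rw [Real.le_log_iff_exp_le (by positivity), le_div_iff₀ hb]; exact hbc
  have hsplit : Real.log (c / a) = Real.log (c / b) + Real.log (b / a) := by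
    rw [← Real.log_mul (by positivity) (by positivity), div_mul_div_cancel₀ hb.ne']
  have hba : a * Real.log (b / a) ≤ b - a := by
    have := mul_le_mul_of_nonneg_left (Real.log_le_sub_one_of_pos (div_pos hb ha)) ha.le
    rwa [mul_sub, mul_div_cancel₀ _ ha.ne', mul_one] at this
  rw [Real.rpow_def_of_pos (by positivity), Real.rpow_def_of_pos (by positivity),
    Real.exp_le_exp, hsplit]
  nlinarith

theorem choose_le_exp_one_mul_div_rpow {n k : ℕ} {b : ℝ} (hk : 0 < k) (hkb : (k : ℝ) ≤ b)
    (hbn : b ≤ n) : (n.choose k : ℝ) ≤ (Real.exp 1 * n / b) ^ b :=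
  calc (n.choose k : ℝ) ≤ (Real.exp 1 * n / k) ^ k := choose_le_exp_one_mul_div_pow n k
    _ = (Real.exp 1 * n / k) ^ (k : ℝ) := (Real.rpow_natCast _ k).symm
    _ ≤ (Real.exp 1 * n / b) ^ b :=
      div_rpow_self_le_div_rpow_self (by exact_mod_cast hk) hkb
        (mul_le_mul_of_nonneg_left hbn (Real.exp_pos 1).le)

theorem factorial_mul_rpow_le_linExtCount {n k : ℕ} {b : ℝ} (hk : 0 < k) (hkb : (k : ℝ) ≤ b)
    (hbn : b ≤ n) :
    n ! * (b / (Real.exp 1 * n)) ^ b ≤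
      linExtCount n (twoLevel fun x : Fin n => (x : ℕ) < n - k) := by
  have hb : 0 < b := lt_of_lt_of_le (by exact_mod_cast hk) hkb
  have hkn : k ≤ n := by exact_mod_cast hkb.trans hbn
  have hn : (0 : ℝ) < n := hb.trans_le hbn
  have hlin := factorial_mul_factorial_le_linExtCount (n.sub_le k)
  rw [Nat.sub_sub_self hkn] at hlin
  rw [← inv_div, Real.inv_rpow (by positivity), ← div_eq_mul_inv, div_le_iff₀ (by positivity),
    ← Nat.choose_mul_factorial_mul_factorial hkn]
  calc ((n.choose k * k ! * (n - k)! : ℕ) : ℝ) = ((n - k)! * k ! : ℕ) * n.choose k := by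
        push_cast; ring
    _ ≤ _ := mul_le_mul (by exact_mod_cast hlin) (choose_le_exp_one_mul_div_rpow hk hkb hbn)
        (by positivity) (by positivity)

theorem exists_dense_with_many_extensions_small_delta (n : ℕ) (hn : 1 ≤ n) (δ : ℝ)
    (hδ0 : 1 / (n : ℝ) ≤ δ) (hδ1 : δ ≤ 1 / 2) :
    ∃ P : PartialOrder (Fin n),
      δ * ((n : ℝ) * ((n : ℝ) - 1) / 2) ≤ (compCount n P : ℝ) ∧
      (Nat.factorial n : ℝ) * (2 * δ / Real.exp 1) ^ (2 * δ * (n : ℝ)) ≤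
        (linExtCount n P : ℝ) := by
  have hnR : (0 : ℝ) < n := by exact_mod_cast hn
  have hδn : 1 ≤ δ * n := by rwa [div_le_iff₀ hnR] at hδ0
  set k := ⌈δ * n⌉₊
  have hk : 0 < k := Nat.ceil_pos.2 (by linarith)
  have hδk : δ * n ≤ k := Nat.le_ceil _
  have hk_lt : (k : ℝ) < δ * n + 1 := Nat.ceil_lt_add_one (by linarith)
  have h2k : 2 * k ≤ n + 1 := by
    have : ((2 * k : ℕ) : ℝ) < (n + 2 : ℕ) := by push_cast; nlinarith
    exact Nat.le_of_lt_succ (Nat.cast_lt.1 this)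
  have hkn : k ≤ n := by omega
  refine ⟨twoLevel fun x : Fin n => (x : ℕ) < n - k, ?_, ?_⟩
  · rw [compCount_twoLevel, Fin.natCard_val_lt (n.sub_le k), Fin.natCard_not_val_lt (n.sub_le k),
      Nat.sub_sub_self hkn, Nat.cast_mul, Nat.cast_sub hkn]
    have : 2 * (k : ℝ) ≤ n + 1 := by exact_mod_cast h2k
    calc δ * (n * (n - 1) / 2) = δ * n * ((n - 1) / 2) := by ring
      _ ≤ k * (n - k) := by gcongr <;> linarith
      _ = (n - k) * k := mul_comm _ _
  · convert factorial_mul_rpow_le_linExtCount (n := n) (b := 2 * δ * n) hk (by linarith)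
      (by nlinarith) using 3
    field_simp
end

section
/- Let 0 < δ < 1 and let n ≥ 2 be an integer with δ·(n−1) ≤ 1, and set m = ⌊δ·n(n−1)/2⌋. Then f⁻(n,δ) = n!·2^{−m}; that is, every partial order Q on n points with comp(Q) ≤ δ·n(n−1)/2 satisfies e(Q) ≥ n!·2^{−m}, and some such partial order attains this value. -/
open Equiv Nat

section LinearExtensions

variable {α : Type*}

lemma swap_trans_injective {β : Type*} [DecidableEq α] (x y : α) :
    Function.Injective ((swap x y).trans : (α ≃ β) → α ≃ β) :=
  fun f g h => Equiv.ext fun a => by simpa using congrArg (· (swap x y a)) h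

def linearExtensions (β : Type*) [LT β] (r : α → α → Prop) : Set (α ≃ β) :=
  {f | ∀ a b, r a b → f a < f b}

variable (β : Type*) [LinearOrder β] {r r' : α → α → Prop} {x y : α}

lemma linearExtensions_eq_univ (h : ∀ a b, ¬ r a b) : linearExtensions β r = Set.univ :=
  Set.eq_univ_of_forall fun _ a b hab => absurd hab (h a b)

section AddPair

variable (hr : ∀ a b, r a b ↔ r' a b ∨ a = x ∧ b = y)
include hr

omit [LinearOrder β] in
lemma ncard_setOf_rel_eq_add_one [Finite α] (hxy : ¬ r' x y) :
    {p : α × α | r p.1 p.2}.ncard = {p : α × α | r' p.1 p.2}.ncard + 1 := by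
  have : {p : α × α | r p.1 p.2} = insert (x, y) {p | r' p.1 p.2} := by
    ext ⟨a, b⟩
    simp [hr, or_comm]
  rw [this, Set.ncard_insert_of_notMem (a := (x, y)) hxy]

lemma linearExtensions_inter_setOf_lt :
    linearExtensions β r' ∩ {f | f x < f y} = linearExtensions β r := by
  ext f
  simp only [linearExtensions, Set.mem_inter_iff, Set.mem_ofPred_eq, hr]
  constructor
  · rintro ⟨hf, hxy⟩ a b (h | ⟨rfl, rfl⟩)
    exacts [hf a b h, hxy]
  · intro hf
    exact ⟨fun a b h => hf a b (Or.inl h), hf x y (Or.inr ⟨rfl, rfl⟩)⟩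

lemma ncard_linearExtensions_eq_add [Finite α] :
    (linearExtensions β r').ncard =
      (linearExtensions β r).ncard + (linearExtensions β r' \ {f | f x < f y}).ncard := by
  rw [← linearExtensions_inter_setOf_lt β hr, Set.ncard_inter_add_ncard_sdiff_eq_ncard]

variable {β} [DecidableEq α]

lemma swap_trans_mem_linearExtensions [IsTrans α r] {f : α ≃ β}
    (hf : f ∈ linearExtensions β r') (hyx : f y < f x) :
    (swap x y).trans f ∈ linearExtensions β r := by
  simp only [linearExtensions, Set.mem_ofPred_eq] at hf ⊢
  have hrxy : r x y := (hr x y).2 (Or.inr ⟨rfl, rfl⟩)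
  intro a b hab
  rw [trans_apply, trans_apply, swap_apply_def, swap_apply_def]
  -- Transitivity is needed only when `a = y` (through `r x b`) and when `b = x` (through `r a y`).
  split_ifs <;> subst_vars <;> grind [trans_of r]

lemma swap_trans_mem_linearExtensions_of_isolated
    (hiso : ∀ a b, r' a b → a ≠ x ∧ a ≠ y ∧ b ≠ x ∧ b ≠ y) {f : α ≃ β}
    (hf : f ∈ linearExtensions β r) : (swap x y).trans f ∈ linearExtensions β r' := by
  intro a b hab
  obtain ⟨hax, hay, hbx, hby⟩ := hiso a b hab
  simpa [swap_apply_of_ne_of_ne, *] using hf a b ((hr a b).2 (Or.inl hab))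

variable (β) [Finite α]

lemma ncard_linearExtensions_sdiff_le [IsTrans α r] (hxy : x ≠ y) :
    (linearExtensions β r' \ {f | f x < f y}).ncard ≤ (linearExtensions β r).ncard := by
  refine Set.ncard_le_ncard_of_injOn _ (fun f hf => ?_) (swap_trans_injective x y).injOn
  exact swap_trans_mem_linearExtensions hr hf.1
    (lt_of_le_of_ne (not_lt.1 hf.2) (f.injective.ne hxy.symm))

lemma ncard_linearExtensions_le_two_mul [IsTrans α r] (hxy : x ≠ y) :
    (linearExtensions β r').ncard ≤ 2 * (linearExtensions β r).ncard := by
  have := ncard_linearExtensions_sdiff_le β hr hxy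
  rw [ncard_linearExtensions_eq_add β hr]
  omega

lemma ncard_linearExtensions_eq_two_mul [IsTrans α r] (hxy : x ≠ y)
    (hiso : ∀ a b, r' a b → a ≠ x ∧ a ≠ y ∧ b ≠ x ∧ b ≠ y) :
    (linearExtensions β r').ncard = 2 * (linearExtensions β r).ncard := by
  have hle : (linearExtensions β r).ncard ≤ (linearExtensions β r' \ {f | f x < f y}).ncard := by
    refine Set.ncard_le_ncard_of_injOn _ (fun f hf => ⟨?_, ?_⟩) (swap_trans_injective x y).injOn
    · exact swap_trans_mem_linearExtensions_of_isolated hr hiso hf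
    · simpa using (hf x y ((hr x y).2 (Or.inr ⟨rfl, rfl⟩))).le
  have := ncard_linearExtensions_sdiff_le β hr hxy
  rw [ncard_linearExtensions_eq_add β hr]
  omega

end AddPair

end LinearExtensions

section LowerBound

variable {α : Type*} [Finite α] {r : α → α → Prop}

lemma exists_cover_of_rel [IsStrictOrder α r] {a b : α} (h : r a b) :
    ∃ y, r a y ∧ ∀ z, r a z → ¬ r z y :=
  (Finite.wellFounded_of_trans_of_irrefl r).has_min {z | r a z} ⟨b, h⟩

omit [Finite α] in
lemma isStrictOrder_remove_cover [IsStrictOrder α r] {x y : α} (hcov : ∀ z, r x z → ¬ r z y) :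
    IsStrictOrder α (fun a b => r a b ∧ ¬(a = x ∧ b = y)) where
  irrefl a h := irrefl a h.1
  trans _ b _ hab hbc := ⟨_root_.trans hab.1 hbc.1, by rintro ⟨rfl, rfl⟩; exact hcov b hab.1 hbc.1⟩

theorem card_equiv_le_ncard_linearExtensions_mul (β : Type*) [LinearOrder β] (r : α → α → Prop)
    [IsStrictOrder α r] :
    Nat.card (α ≃ β) ≤ (linearExtensions β r).ncard * 2 ^ {p : α × α | r p.1 p.2}.ncard := by
  classical
  induction hc : {p : α × α | r p.1 p.2}.ncard generalizing r with
  | zero =>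
    have hno : ∀ a b, ¬ r a b := fun a b h =>
      ((Set.ncard_eq_zero (Set.toFinite _)).1 hc).subset
        (show (a, b) ∈ {p : α × α | r p.1 p.2} from h)
    rw [linearExtensions_eq_univ β hno, Set.ncard_univ, pow_zero, mul_one]
  | succ c ih =>
    obtain ⟨⟨x, b⟩, hxb⟩ :=
      Set.nonempty_of_ncard_ne_zero (s := {p : α × α | r p.1 p.2}) (by omega)
    obtain ⟨y, hxy, hcov⟩ := exists_cover_of_rel (show r x b from hxb)
    set r' : α → α → Prop := fun a b => r a b ∧ ¬(a = x ∧ b = y)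
    have := isStrictOrder_remove_cover hcov
    have hr : ∀ a b, r a b ↔ r' a b ∨ a = x ∧ b = y := fun a b => by
      by_cases hab : a = x ∧ b = y
      · obtain ⟨rfl, rfl⟩ := hab
        simpa [r'] using hxy
      · simp only [r']
        tauto
    have hc' : {p : α × α | r' p.1 p.2}.ncard = c := by
      have := ncard_setOf_rel_eq_add_one hr (fun h => h.2 ⟨rfl, rfl⟩)
      omega
    calc Nat.card (α ≃ β) ≤ (linearExtensions β r').ncard * 2 ^ c := hc' ▸ ih r' hc'
      _ ≤ 2 * (linearExtensions β r).ncard * 2 ^ c := by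
        gcongr
        exact ncard_linearExtensions_le_two_mul β hr (ne_of_irrefl hxy)
      _ = (linearExtensions β r).ncard * 2 ^ (c + 1) := by ring

end LowerBound

section Matching

variable {n : ℕ}

def matchingRel (n m : ℕ) (a b : Fin n) : Prop :=
  a.val % 2 = 0 ∧ b.val = a.val + 1 ∧ b.val < 2 * m

instance (m : ℕ) : IsStrictOrder (Fin n) (matchingRel n m) where
  irrefl a h := by unfold matchingRel at h; omega
  trans a b c hab hbc := by unfold matchingRel at *; omega

lemma matchingRel_succ_iff {m : ℕ} (h : 2 * m + 2 ≤ n) (a b : Fin n) :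
    matchingRel n (m + 1) a b ↔
      matchingRel n m a b ∨ a = ⟨2 * m, by omega⟩ ∧ b = ⟨2 * m + 1, by omega⟩ := by
  simp only [matchingRel, Fin.ext_iff]
  omega

lemma compCount_matching {m : ℕ} (h : 2 * m ≤ n) :
    compCount n (partialOrderOfSO (matchingRel n m)) = m := by
  show {p : Fin n × Fin n | matchingRel n m p.1 p.2}.ncard = m
  induction m with
  | zero => simp [matchingRel]
  | succ m ih =>
    rw [ncard_setOf_rel_eq_add_one (matchingRel_succ_iff h), ih (by omega)]
    simp [matchingRel]

lemma linExtCount_matching_mul {m : ℕ} (h : 2 * m ≤ n) :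
    linExtCount n (partialOrderOfSO (matchingRel n m)) * 2 ^ m = n ! := by
  show (linearExtensions (Fin n) (matchingRel n m)).ncard * 2 ^ m = (n !)
  induction m with
  | zero =>
    rw [linearExtensions_eq_univ _ fun a b hab => by unfold matchingRel at hab; omega]
    simp [Set.ncard_univ, Nat.card_eq_fintype_card, Fintype.card_perm]
  | succ m ih =>
    rw [← ih (by omega), ncard_linearExtensions_eq_two_mul _ (matchingRel_succ_iff h)]
    · ring
    · simp [Fin.ext_iff]
    · intro a b hab
      simp only [matchingRel, ne_eq, Fin.ext_iff] at hab ⊢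
      omega

end Matching

section Counts

variable {n : ℕ}

lemma factorial_le_linExtCount_mul_two_pow (P : PartialOrder (Fin n)) :
    n ! ≤ linExtCount n P * 2 ^ compCount n P := by
  let _ := P
  have := card_equiv_le_ncard_linearExtensions_mul (Fin n) P.lt
  rwa [Nat.card_eq_fintype_card, Fintype.card_perm, Fintype.card_fin] at this

lemma fMinus_eq_of_forall_le {δ : ℝ} (P₀ : PartialOrder (Fin n))
    (h₀ : (compCount n P₀ : ℝ) ≤ δ * ((n : ℝ) * ((n : ℝ) - 1) / 2))
    (hmin : ∀ P : PartialOrder (Fin n), (compCount n P : ℝ) ≤ δ * ((n : ℝ) * ((n : ℝ) - 1) / 2) →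
      linExtCount n P₀ ≤ linExtCount n P) :
    fMinus n δ = linExtCount n P₀ :=
  IsLeast.csInf_eq ⟨⟨P₀, h₀, rfl⟩, by rintro _ ⟨P, hP, rfl⟩; exact hmin P hP⟩

end Counts

lemma two_mul_floor_le {δ : ℝ} {n : ℕ} (hvs : δ * ((n : ℝ) - 1) ≤ 1) :
    2 * ⌊δ * ((n : ℝ) * ((n : ℝ) - 1) / 2)⌋₊ ≤ n := by
  rcases le_or_gt 0 (δ * ((n : ℝ) * ((n : ℝ) - 1) / 2)) with hB | hB
  · have := Nat.floor_le hB
    have hn : (0 : ℝ) ≤ n := n.cast_nonneg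
    have : (2 * ⌊δ * ((n : ℝ) * ((n : ℝ) - 1) / 2)⌋₊ : ℝ) ≤ n := by nlinarith
    exact_mod_cast this
  · simp [Nat.floor_eq_zero.2 (hB.trans_le zero_le_one)]

theorem fminus_very_sparse_general (δ : ℝ) (hδ0 : 0 < δ) (n : ℕ)
    (hvs : δ * ((n : ℝ) - 1) ≤ 1) :
    (fMinus n δ : ℝ) =
        (Nat.factorial n : ℝ) / 2 ^ ⌊δ * ((n : ℝ) * ((n : ℝ) - 1) / 2)⌋₊ ∧
    (∀ P : PartialOrder (Fin n),
        (compCount n P : ℝ) ≤ δ * ((n : ℝ) * ((n : ℝ) - 1) / 2) →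
        (Nat.factorial n : ℝ) / 2 ^ ⌊δ * ((n : ℝ) * ((n : ℝ) - 1) / 2)⌋₊ ≤
          (linExtCount n P : ℝ)) ∧
    (∃ P : PartialOrder (Fin n),
        (compCount n P : ℝ) ≤ δ * ((n : ℝ) * ((n : ℝ) - 1) / 2) ∧
        (linExtCount n P : ℝ) =
          (Nat.factorial n : ℝ) / 2 ^ ⌊δ * ((n : ℝ) * ((n : ℝ) - 1) / 2)⌋₊) := by
  set m := ⌊δ * ((n : ℝ) * ((n : ℝ) - 1) / 2)⌋₊
  have h2m : 2 * m ≤ n := two_mul_floor_le hvs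
  have hpow : (0 : ℝ) < 2 ^ m := by positivity
  have hlower : ∀ P : PartialOrder (Fin n),
      (compCount n P : ℝ) ≤ δ * ((n : ℝ) * ((n : ℝ) - 1) / 2) →
      (n ! : ℝ) / 2 ^ m ≤ linExtCount n P := fun P hP => by
    have : n ! ≤ linExtCount n P * 2 ^ m := (factorial_le_linExtCount_mul_two_pow P).trans
      (Nat.mul_le_mul_left _ (Nat.pow_le_pow_right two_pos (Nat.le_floor hP)))
    rw [div_le_iff₀ hpow]
    exact_mod_cast this
  set M := partialOrderOfSO (matchingRel n m)
  have hMcomp : (compCount n M : ℝ) ≤ δ * ((n : ℝ) * ((n : ℝ) - 1) / 2) := by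
    rw [compCount_matching h2m]
    exact Nat.floor_le (by rw [← Nat.cast_choose_two]; positivity)
  have hMext : (linExtCount n M : ℝ) = n ! / 2 ^ m := by
    rw [eq_div_iff hpow.ne']
    exact_mod_cast linExtCount_matching_mul h2m
  refine ⟨?_, hlower, M, hMcomp, hMext⟩
  rw [fMinus_eq_of_forall_le M hMcomp fun P hP => ?_, hMext]
  exact_mod_cast hMext ▸ hlower P hP

theorem fminus_very_sparse (δ : ℝ) (hδ0 : 0 < δ) (hδ1 : δ < 1) (n : ℕ) (hn : 2 ≤ n)
    (hvs : δ * ((n : ℝ) - 1) ≤ 1) :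
    (fMinus n δ : ℝ) =
        (Nat.factorial n : ℝ) / 2 ^ ⌊δ * ((n : ℝ) * ((n : ℝ) - 1) / 2)⌋₊ ∧
    (∀ P : PartialOrder (Fin n),
        (compCount n P : ℝ) ≤ δ * ((n : ℝ) * ((n : ℝ) - 1) / 2) →
        (Nat.factorial n : ℝ) / 2 ^ ⌊δ * ((n : ℝ) * ((n : ℝ) - 1) / 2)⌋₊ ≤
          (linExtCount n P : ℝ)) ∧
    (∃ P : PartialOrder (Fin n),
        (compCount n P : ℝ) ≤ δ * ((n : ℝ) * ((n : ℝ) - 1) / 2) ∧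
        (linExtCount n P : ℝ) =
          (Nat.factorial n : ℝ) / 2 ^ ⌊δ * ((n : ℝ) * ((n : ℝ) - 1) / 2)⌋₊) :=
  fminus_very_sparse_general δ hδ0 n hvs
end

section
/- Let Q be a partially ordered set on n points whose height is at most k, i.e. every chain of Q has at most k elements, where k ≥ 1. Then e(Q) ≥ n! / k^n. -/
/-! Grade every point by its height, the length of the longest chain below it: heights lie in
`{0, …, k - 1}` and strictly increase along the order. For a permutation `σ`, listing the points by
height and breaking ties by `σ` gives a linear extension. The permutation is recovered from this
extension together with the word of heights read off along `σ`, because on each height class `σ`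
and the extension induce the same order. Hence `n! ≤ e(Q) * k ^ n`. -/

open Order

section

variable {α β γ : Type*}

theorem Order.height_lt_of_chain_card_le [PartialOrder α] {k : ℕ}
    (hk : ∀ C : Finset α, IsChain (· < ·) (C : Set α) → C.card ≤ k) (x : α) :
    height x < k := by
  classical
  have hlen : ∀ p : LTSeries α, p.length + 1 ≤ k := fun p => by
    have hchain : IsChain (· < ·) ((Finset.univ.image p : Finset α) : Set α) := by
      rw [Finset.coe_image, Finset.coe_univ, Set.image_univ]
      exact p.strictMono.monotone.isChain_range.lt_of_le
    simpa [Finset.card_image_of_injective _ p.strictMono.injective] using hk _ hchain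
  have hk1 : 1 ≤ k := hlen (RelSeries.singleton _ x)
  calc height x ≤ (k - 1 : ℕ) :=
        height_le fun p _ => by exact_mod_cast (by have := hlen p; omega : p.length ≤ k - 1)
    _ < k := by exact_mod_cast (by omega : k - 1 < k)

theorem exists_strictMono_fin_of_chain_card_le [PartialOrder α] {k : ℕ}
    (hk : ∀ C : Finset α, IsChain (· < ·) (C : Set α) → C.card ≤ k) :
    ∃ f : α → Fin k, StrictMono f := by
  have hheight (x : α) : ((height x).toNat : ℕ∞) = height x :=
    ENat.natCast_toNat (height_lt_of_chain_card_le hk x).ne_top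
  refine ⟨fun x => ⟨(height x).toNat, ?_⟩, fun x y hxy => ?_⟩
  · exact_mod_cast (hheight x).trans_lt (height_lt_of_chain_card_le hk x)
  · have := height_strictMono hxy ((hheight x).symm ▸ ENat.natCast_lt_top _)
    rw [← hheight x, ← hheight y] at this
    exact Fin.mk_lt_mk.2 (by exact_mod_cast this)

theorem exists_equiv_fin_lt_iff_of_injective [Fintype α] [LinearOrder γ]
    {f : α → γ} (hf : Function.Injective f) {n : ℕ} (hn : Fintype.card α = n) :
    ∃ e : α ≃ Fin n, ∀ x y, e x < e y ↔ f x < f y := by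
  classical
  have hcard : Fintype.card (Set.range f) = n := by
    rw [Set.card_range_of_injective hf, hn]
  exact ⟨(Equiv.ofInjective f hf).trans (Fintype.orderIsoFinOfCardEq _ hcard).symm.toEquiv,
    fun x y => (Fintype.orderIsoFinOfCardEq _ hcard).symm.lt_iff_lt⟩

theorem Equiv.Perm.eq_one_of_strictMono [LinearOrder γ] [WellFoundedLT γ]
    {π : Equiv.Perm γ} (hπ : StrictMono π) : π = 1 :=
  Equiv.ext fun i => DFunLike.congr_fun
    (Subsingleton.elim (StrictMono.orderIsoOfSurjective π hπ π.surjective) (OrderIso.refl γ)) i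

theorem Equiv.Perm.eq_one_of_strictMono_on_fibers [LinearOrder γ] [WellFoundedLT γ]
    {π : Equiv.Perm γ} (g : γ → β) (hg : ∀ i, g (π i) = g i)
    (hπ : ∀ i j, g i = g j → i < j → π i < π j) : π = 1 := by
  ext i
  have hfiber : π.subtypePerm (p := fun j => g j = g i) (fun j => by rw [hg]) = 1 :=
    eq_one_of_strictMono fun a b hab => hπ a b (a.2.trans b.2.symm) hab
  simpa using congrArg (fun ρ => (ρ ⟨i, rfl⟩ : γ)) hfiber

theorem Equiv.eq_of_comp_symm_eq_of_lt_imp_lt [LinearOrder γ] [WellFoundedLT γ]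
    {h : α → β} {σ τ : α ≃ γ} (hlevel : ∀ i, h (σ.symm i) = h (τ.symm i))
    (hlt : ∀ x y, h x = h y → σ x < σ y → τ x < τ y) : σ = τ := by
  have hπ : σ.symm.trans τ = 1 := by
    refine Equiv.Perm.eq_one_of_strictMono_on_fibers (h ∘ σ.symm) (fun i => ?_)
      (fun i j hg hij => ?_)
    · simp [hlevel (τ (σ.symm i))]
    · simpa using hlt (σ.symm i) (σ.symm j) hg (by simpa using hij)
  ext x
  simpa using (congrArg (fun ρ : Equiv.Perm γ => ρ (σ x)) hπ).symm

theorem card_equiv_le_card_strictMono_mul [PartialOrder α] [Fintype α]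
    [LinearOrder β] [Finite β] {h : α → β} (hh : StrictMono h) (n : ℕ) :
    Nat.card (α ≃ Fin n) ≤ Nat.card {f : α ≃ Fin n // StrictMono f} * Nat.card β ^ n := by
  choose e he using fun σ : α ≃ Fin n =>
    exists_equiv_fin_lt_iff_of_injective (f := fun x => toLex (h x, σ x))
      (fun x y hxy => σ.injective (congrArg (fun p => (ofLex p).2) hxy))
      ((Fintype.card_congr σ).trans (Fintype.card_fin n))
  let Φ : (α ≃ Fin n) → {f : α ≃ Fin n // StrictMono f} × (Fin n → β) := fun σ =>
    (⟨e σ, fun x y hxy => (he σ x y).2 (Prod.Lex.toLex_lt_toLex.2 (Or.inl (hh hxy)))⟩,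
      h ∘ σ.symm)
  have hΦ : Function.Injective Φ := fun σ τ hστ => by
    obtain ⟨hext, hlevel⟩ := Prod.ext_iff.1 hστ
    have he_eq : e σ = e τ := congrArg Subtype.val hext
    refine Equiv.eq_of_comp_symm_eq_of_lt_imp_lt (congrFun hlevel) fun x y hxy hlt => ?_
    have := (he σ x y).2 (Prod.Lex.toLex_lt_toLex.2 (Or.inr ⟨hxy, hlt⟩))
    rw [he_eq, he τ, Prod.Lex.toLex_lt_toLex] at this
    simpa [hxy] using this
  simpa [Nat.card_prod, Nat.card_fun] using Nat.card_le_card_of_injective Φ hΦ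

end

theorem linExtCount_ge_of_height_le_general (n k : ℕ) (P : PartialOrder (Fin n))
    (hheight : ∀ C : Finset (Fin n),
      (∀ x ∈ C, ∀ y ∈ C, x ≠ y → P.lt x y ∨ P.lt y x) → C.card ≤ k) :
    (Nat.factorial n : ℝ) / (k : ℝ) ^ n ≤ (linExtCount n P : ℝ) := by
  -- `P` is not the instance on `Fin n` (that is its linear order), so it is passed explicitly.
  obtain ⟨h, hh⟩ := @exists_strictMono_fin_of_chain_card_le (Fin n) P k hheight
  have hcount : n.factorial ≤ linExtCount n P * k ^ n := by
    have := @card_equiv_le_card_strictMono_mul (Fin n) (Fin k) P _ _ _ h hh n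
    rwa [Nat.card_eq_fintype_card (α := Fin n ≃ Fin n), Fintype.card_equiv (Equiv.refl _),
      Fintype.card_fin, Nat.card_fin] at this
  rcases (pow_nonneg (Nat.cast_nonneg k) n : (0 : ℝ) ≤ (k : ℝ) ^ n).eq_or_lt with h0 | hpos
  · rw [← h0, div_zero]
    positivity
  · rw [div_le_iff₀ hpos]
    exact_mod_cast hcount

theorem linExtCount_ge_of_height_le (n k : ℕ) (hk : 1 ≤ k) (P : PartialOrder (Fin n))
    (hheight : ∀ C : Finset (Fin n),
      (∀ x ∈ C, ∀ y ∈ C, x ≠ y → P.lt x y ∨ P.lt y x) → C.card ≤ k) :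
    (Nat.factorial n : ℝ) / (k : ℝ) ^ n ≤ (linExtCount n P : ℝ) :=
  linExtCount_ge_of_height_le_general n k P hheight
end

section
/- For every 0 < δ ≤ 1 and every positive integer n, there exists a partially ordered set Q on n points with comp(Q) ≤ δ·n(n−1)/2 and e(Q) ≤ ⌈1/δ⌉^n. -/
section ChainCover

variable {α β κ : Type*} [LinearOrder β] {r : α → α → Prop} {c : α → κ}

theorem Equiv.not_rel_symm_apply_of_forall_lt {f g : α ≃ β} (hg : ∀ x y, r x y → g x < g y)
    {i : β} (hbelow : ∀ j < i, f.symm j = g.symm j) : ¬ r (f.symm i) (g.symm i) := by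
  intro hr
  have hlt : g (f.symm i) < i := by simpa using hg _ _ hr
  exact hlt.ne (by simpa using congrArg g (hbelow _ hlt))

theorem Equiv.eq_of_comp_symm_eq [WellFoundedLT β]
    (hc : ∀ x y, c x = c y → x = y ∨ r x y ∨ r y x) {f g : α ≃ β}
    (hf : ∀ x y, r x y → f x < f y) (hg : ∀ x y, r x y → g x < g y)
    (h : c ∘ f.symm = c ∘ g.symm) : f = g := by
  suffices hsymm : ∀ i, f.symm i = g.symm i from
    Equiv.symm_bijective.injective (Equiv.ext hsymm)
  intro i
  induction i using WellFoundedLT.induction with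
  | _ i ih =>
    rcases hc _ _ (congrFun h i) with heq | hfg | hgf
    · exact heq
    · exact absurd hfg (Equiv.not_rel_symm_apply_of_forall_lt hg ih)
    · exact absurd hgf
        (Equiv.not_rel_symm_apply_of_forall_lt hf fun j hj => (ih j hj).symm)

end ChainCover

theorem linExtCount_le_pow {n k : ℕ} (P : PartialOrder (Fin n)) (c : Fin n → Fin k)
    (hc : ∀ x y, c x = c y → x = y ∨ P.lt x y ∨ P.lt y x) : linExtCount n P ≤ k ^ n :=
  calc linExtCount n P ≤ Nat.card (Fin n → Fin k) :=
        Nat.card_le_card_of_injective (fun f => c ∘ f.1.symm) fun f g h =>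
          Subtype.ext (Equiv.eq_of_comp_symm_eq hc f.2 g.2 h)
    _ = k ^ n := by simp

theorem compCount_eq_sum (n : ℕ) (P : PartialOrder (Fin n)) :
    compCount n P = ∑ y : Fin n, Nat.card {x : Fin n // P.lt x y} := by
  rw [compCount, ← Nat.card_sigma]
  exact Nat.card_congr
    { toFun := fun p => ⟨p.1.2, p.1.1, p.2⟩
      invFun := fun s => ⟨(s.2.1, s.1), s.2.2⟩
      left_inv := fun _ => rfl
      right_inv := fun _ => rfl }

abbrev residueChainOrder (n k : ℕ) : PartialOrder (Fin n) where
  le x y := x.val % k = y.val % k ∧ x ≤ y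
  lt x y := x.val % k = y.val % k ∧ x < y
  le_refl _ := ⟨rfl, le_rfl⟩
  le_trans _ _ _ hab hbc := ⟨hab.1.trans hbc.1, hab.2.trans hbc.2⟩
  le_antisymm _ _ hab hba := le_antisymm hab.2 hba.2
  lt_iff_le_not_ge _ _ :=
    ⟨fun h => ⟨⟨h.1, h.2.le⟩, fun h' => h'.2.not_gt h.2⟩,
     fun h => ⟨h.1.1, lt_of_le_not_ge h.1.2 fun h' => h.2 ⟨h.1.1.symm, h'⟩⟩⟩

namespace residueChainOrder

variable {n k : ℕ}

theorem div_lt_div_of_lt {x y : Fin n} (h : (residueChainOrder n k).lt x y) :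
    x.val / k < y.val / k :=
  (Nat.div_le_div_right h.2.le).lt_of_ne fun hdiv => h.2.ne (Fin.ext (Nat.ext_div_mod hdiv h.1))

theorem trichotomous_of_mod_eq {x y : Fin n} (h : x.val % k = y.val % k) :
    x = y ∨ (residueChainOrder n k).lt x y ∨ (residueChainOrder n k).lt y x := by
  rcases lt_trichotomy x y with hxy | hxy | hxy
  · exact Or.inr (Or.inl ⟨h, hxy⟩)
  · exact Or.inl hxy
  · exact Or.inr (Or.inr ⟨h.symm, hxy⟩)

theorem mul_card_lt_le (y : Fin n) :
    k * Nat.card {x : Fin n // (residueChainOrder n k).lt x y} ≤ y := by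
  have hembed : Nat.card {x : Fin n // (residueChainOrder n k).lt x y} ≤ y / k := by
    refine (Nat.card_le_card_of_injective
      (fun x => (⟨x.1.val / k, div_lt_div_of_lt x.2⟩ : Fin (y / k))) ?_).trans_eq (by simp)
    intro a b hab
    exact Subtype.ext (Fin.ext (Nat.ext_div_mod (congrArg Fin.val hab) (a.2.1.trans b.2.1.symm)))
  exact (Nat.mul_le_mul_left k hembed).trans (Nat.mul_div_le y k)

theorem mul_compCount_le : k * compCount n (residueChainOrder n k) ≤ ∑ y : Fin n, y.val := by
  rw [compCount_eq_sum, Finset.mul_sum]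
  exact Finset.sum_le_sum fun y _ => mul_card_lt_le y

end residueChainOrder

theorem Fin.sum_univ_val_cast (n : ℕ) : ∑ y : Fin n, (y.val : ℝ) = n * (n - 1) / 2 := by
  rw [Fin.sum_univ_eq_sum_range (fun i => (i : ℝ)) n]
  induction n with
  | zero => simp
  | succ m ih =>
    rw [Finset.sum_range_succ, ih]
    push_cast
    ring

theorem exists_sparse_with_few_extensions_general (δ : ℝ) (hδ0 : 0 < δ)
    (n : ℕ) :
    ∃ P : PartialOrder (Fin n),
      (compCount n P : ℝ) ≤ δ * ((n : ℝ) * ((n : ℝ) - 1) / 2) ∧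
      linExtCount n P ≤ ⌈1 / δ⌉₊ ^ n := by
  set k := ⌈1 / δ⌉₊
  have hk : 0 < k := Nat.ceil_pos.mpr (by positivity)
  have hδk : 1 ≤ δ * k := by
    have := mul_le_mul_of_nonneg_left (Nat.le_ceil (1 / δ)) hδ0.le
    rwa [mul_one_div_cancel hδ0.ne'] at this
  refine ⟨residueChainOrder n k, ?_,
    linExtCount_le_pow _ (fun x => ⟨x.val % k, Nat.mod_lt _ hk⟩)
      fun x y h => residueChainOrder.trichotomous_of_mod_eq (congrArg Fin.val h)⟩
  have hcomp : (k : ℝ) * compCount n (residueChainOrder n k) ≤ n * (n - 1) / 2 := by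
    rw [← Fin.sum_univ_val_cast]
    exact_mod_cast residueChainOrder.mul_compCount_le
  calc (compCount n (residueChainOrder n k) : ℝ)
      ≤ δ * k * compCount n (residueChainOrder n k) := le_mul_of_one_le_left (by positivity) hδk
    _ = δ * (k * compCount n (residueChainOrder n k)) := mul_assoc _ _ _
    _ ≤ δ * ((n : ℝ) * ((n : ℝ) - 1) / 2) := by gcongr

theorem exists_sparse_with_few_extensions (δ : ℝ) (hδ0 : 0 < δ) (hδ1 : δ ≤ 1)
    (n : ℕ) (hn : 1 ≤ n) :
    ∃ P : PartialOrder (Fin n),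
      (compCount n P : ℝ) ≤ δ * ((n : ℝ) * ((n : ℝ) - 1) / 2) ∧
      linExtCount n P ≤ ⌈1 / δ⌉₊ ^ n :=
  exists_sparse_with_few_extensions_general δ hδ0 n
end
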